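/- arXiv:2412.03869 — 7 statements merged into one kernel-verified Lean document; each statement's English description precedes it below -/
import Mathlib

section
/- For every integer n ≥ 7 there exists a connected finite simple graph of order n and size exactly ⌊3n/2⌋ + 1 that has no independent minimum vertex cut; hence the size bound ⌊3n/2⌋ in the preceding result is best possible. -/
/-!
The witness is the Hamiltonian cycle `0 – 1 – ⋯ – (n-1) – 0` with the extra chord `{1, n-1}` and the
`⌊n/2⌋` chords `{c, c + ⌊(n-1)/2⌋}`, `c ≥ 1`. Vertex `0` has degree `2` and its two neighbours are
adjacent, so `κ ≤ 2` and `{1, n-1}` is a non-independent cut. Deleting one vertex of the Hamiltonian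
cycle leaves a path. Deleting two non-adjacent vertices `x < y` leaves the arc strictly between them
and the complementary arc; some chord `{c, c + ⌊(n-1)/2⌋}` has one end on the inner arc
and the other just above `y` or just below `x`, unless `x ≤ 1` and `y = n - 1`, when `x` and `y` are
adjacent. So no independent set of at most two vertices separates the graph.
-/

open SimpleGraph

/-- `S` is a vertex cut of `G`: a proper subset of the vertex set whose removal
disconnects the graph. -/
def IsVertexCut {V : Type*} [Fintype V] (G : SimpleGraph V) (S : Finset V) : Prop :=
  (S : Set V) ≠ Set.univ ∧ ¬ (G.induce ((S : Set V)ᶜ)).Connected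

/-- The connectivity `κ(G)`: the minimum cardinality of a vertex cut of `G`. -/
noncomputable def graphConnectivity {V : Type*} [Fintype V] (G : SimpleGraph V) : ℕ :=
  sInf {k | ∃ S : Finset V, IsVertexCut G S ∧ S.card = k}

namespace SimpleGraph

section General

variable {V : Type*} {G : SimpleGraph V}

lemma preconnected_induce_of_ordConnected [LinearOrder V] [SuccOrder V] [IsSuccArchimedean V]
    (hG : hasse V ≤ G) {s : Set V} (hs : s.OrdConnected) : (G.induce s).Preconnected := by
  have key : ∀ u v (hu : u ∈ s) (hv : v ∈ s), u ≤ v →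
      (G.induce s).Reachable ⟨u, hu⟩ ⟨v, hv⟩ := by
    intro u v hu hv huv
    induction huv using Succ.rec with
    | rfl => rfl
    | succ w huw ih =>
      have hw : w ∈ s := hs.out hu hv ⟨huw, Order.le_succ w⟩
      by_cases hmax : IsMax w
      · simpa only [Order.succ_eq_iff_isMax.2 hmax] using ih hw
      · have hadj : G.Adj w (Order.succ w) :=
          hG (hasse_adj.2 (.inl (Order.covBy_succ_of_not_isMax hmax)))
        exact (ih hw).trans (Adj.reachable (G := G.induce s) hadj)
  rintro ⟨u, hu⟩ ⟨v, hv⟩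
  rcases le_total u v with huv | hvu
  · exact key u v hu hv huv
  · exact (key v u hv hu hvu).symm

lemma not_connected_induce_compl {s : Set V} {v w : V} (hv : v ∉ s) (hw : w ∉ s) (hvw : v ≠ w)
    (hN : G.neighborSet v ⊆ s) : ¬(G.induce sᶜ).Connected := by
  intro h
  have : Nontrivial (sᶜ : Set V) := ⟨⟨v, hv⟩, ⟨w, hw⟩, fun e => hvw (congrArg Subtype.val e)⟩
  obtain ⟨⟨u, hu⟩, hvu⟩ := h.preconnected.exists_adj_of_nontrivial ⟨v, hv⟩
  exact hu (hN hvu)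

end General

section OnFin

variable {n : ℕ} {G : SimpleGraph (Fin n)}

lemma ncard_edgeSet_fromRel_mem (E : Finset (ℕ × ℕ)) (hE : ∀ p ∈ E, p.1 < p.2 ∧ p.2 < n) :
    (fromRel fun u v : Fin n => ((u : ℕ), (v : ℕ)) ∈ E).edgeSet.ncard = E.card := by
  rw [← Set.ncard_coe_finset]
  symm
  refine Set.ncard_congr
    (fun p hp => s(⟨p.1, (hE p hp).1.trans (hE p hp).2⟩, ⟨p.2, (hE p hp).2⟩)) ?_ ?_ ?_
  · intro p hp
    exact ⟨Fin.ne_of_val_ne (hE p hp).1.ne, .inl hp⟩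
  · rintro ⟨a, b⟩ ⟨c, d⟩ hp hq h
    have hab := (hE _ hp).1
    have hcd := (hE _ hq).1
    simp only [Sym2.eq_iff, Fin.mk.injEq] at h hab hcd
    rcases h with ⟨rfl, rfl⟩ | ⟨rfl, rfl⟩
    · rfl
    · omega
  · intro e he
    induction e using Sym2.ind with
    | _ u v =>
      rcases he.2 with h | h
      · exact ⟨_, h, rfl⟩
      · exact ⟨_, h, Sym2.eq_swap⟩

lemma preconnected_induce_compl_Icc (hG : cycleGraph n ≤ G) (x y : Fin n) :
    (G.induce (Set.Icc x y)ᶜ).Preconnected := by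
  have hP : pathGraph n ≤ G := pathGraph_le_cycleGraph.trans hG
  have hcompl : (Set.Icc x y)ᶜ = Set.Iio x ∪ Set.Ioi y := by
    ext v
    simp only [Set.mem_compl_iff, Set.mem_Icc, Set.mem_union, Set.mem_Iio, Set.mem_Ioi,
      not_and_or, not_le]
  rw [hcompl]
  rcases (Set.Iio x).eq_empty_or_nonempty with h | ⟨a, ha⟩
  · rw [h, Set.empty_union]
    exact preconnected_induce_of_ordConnected hP Set.ordConnected_Ioi
  rcases (Set.Ioi y).eq_empty_or_nonempty with h | ⟨b, hb⟩
  · rw [h, Set.union_empty]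
    exact preconnected_induce_of_ordConnected hP Set.ordConnected_Iio
  obtain ⟨k, rfl⟩ := Nat.exists_eq_succ_of_ne_zero a.pos.ne'
  have hlast : 0 < Fin.last k := (Fin.zero_le a).trans_lt (ha.trans_le (Fin.le_last x))
  refine (connected_induce_union (v := 0) (w := Fin.last k)
    (preconnected_induce_of_ordConnected hP Set.ordConnected_Iio)
    (preconnected_induce_of_ordConnected hP Set.ordConnected_Ioi)
    ((Fin.zero_le a).trans_lt ha) (hb.trans_le (Fin.le_last b)) (hG ?_)).preconnected
  rw [cycleGraph_adj', Fin.coe_sub_iff_lt.2 hlast]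
  simp

lemma connected_induce_compl_singleton (hG : cycleGraph n ≤ G) (hn : 2 ≤ n) (x : Fin n) :
    (G.induce {x}ᶜ).Connected := by
  have : Nontrivial (Fin n) := Fin.nontrivial_iff_two_le.2 hn
  obtain ⟨v, hv⟩ := exists_ne x
  rw [connected_iff, ← Set.Icc_self]
  exact ⟨preconnected_induce_compl_Icc hG x x, ⟨v, by simpa using hv⟩⟩

lemma connected_induce_compl_pair (hG : cycleGraph n ≤ G) {x y u w : Fin n}
    (hu : u ∈ Set.Ioo x y) (hw : w ∉ Set.Icc x y) (huw : G.Adj u w) :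
    (G.induce {x, y}ᶜ).Connected := by
  have hxy : x < y := hu.1.trans hu.2
  have hsplit : ({x, y} : Set (Fin n))ᶜ = Set.Ioo x y ∪ (Set.Icc x y)ᶜ := by
    ext v
    simp only [Set.mem_compl_iff, Set.mem_insert_iff, Set.mem_singleton_iff, Set.mem_union,
      Set.mem_Ioo, Set.mem_Icc]
    grind
  rw [hsplit]
  exact connected_induce_union (preconnected_induce_of_ordConnected
    (pathGraph_le_cycleGraph.trans hG) Set.ordConnected_Ioo) (preconnected_induce_compl_Icc hG x y)
    hu hw huw

end OnFin

end SimpleGraph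

lemma Finset.exists_eq_pair_of_card_le_two {α : Type*} [DecidableEq α] {s : Finset α}
    (hs : s.Nonempty) (h2 : s.card ≤ 2) : ∃ x ∈ s, ∃ y ∈ s, s = {x, y} := by
  obtain h | h : s.card = 1 ∨ s.card = 2 := by have := hs.card_pos; omega
  · obtain ⟨x, rfl⟩ := Finset.card_eq_one.1 h
    exact ⟨x, by simp, x, by simp, by simp⟩
  · obtain ⟨x, y, -, rfl⟩ := Finset.card_eq_two.1 h
    exact ⟨x, by simp, y, by simp, rfl⟩

open Finset in
def chordedCycleEdges (n : ℕ) : Finset (ℕ × ℕ) :=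
  (range (n - 1)).image (fun a => (a, a + 1)) ∪ {(0, n - 1), (1, n - 1)} ∪
    (Icc 1 (n - 1 - (n - 1) / 2)).image (fun a => (a, a + (n - 1) / 2))

def chordedCycle (n : ℕ) : SimpleGraph (Fin n) :=
  fromRel fun u v => ((u : ℕ), (v : ℕ)) ∈ chordedCycleEdges n

section ChordedCycle

variable {n : ℕ}

lemma mem_chordedCycleEdges {a b : ℕ} :
    (a, b) ∈ chordedCycleEdges n ↔
      b = a + 1 ∧ b < n ∨ a ≤ 1 ∧ b = n - 1 ∨ 1 ≤ a ∧ b = a + (n - 1) / 2 ∧ b < n := by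
  simp only [chordedCycleEdges, Finset.mem_union, Finset.mem_image, Finset.mem_range,
    Finset.mem_Icc, Finset.mem_insert, Finset.mem_singleton, Prod.mk.injEq, existsAndEq, true_and]
  omega

lemma card_chordedCycleEdges (hn : 7 ≤ n) : (chordedCycleEdges n).card = 3 * n / 2 + 1 := by
  rw [chordedCycleEdges, Finset.card_union_of_disjoint, Finset.card_union_of_disjoint,
    Finset.card_image_of_injective, Finset.card_image_of_injective, Finset.card_pair,
    Finset.card_range, Nat.card_Icc]
  · omega
  · simp
  · exact fun a b h => (Prod.mk.inj h).1
  · exact fun a b h => (Prod.mk.inj h).1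
  all_goals
    rw [Finset.disjoint_left]
    rintro ⟨a, b⟩
    simp only [Finset.mem_union, Finset.mem_image, Finset.mem_range, Finset.mem_Icc,
      Finset.mem_insert, Finset.mem_singleton, Prod.mk.injEq, existsAndEq, true_and]
    omega

lemma ncard_edgeSet_chordedCycle (hn : 7 ≤ n) :
    (chordedCycle n).edgeSet.ncard = 3 * n / 2 + 1 := by
  rw [chordedCycle, ncard_edgeSet_fromRel_mem, card_chordedCycleEdges hn]
  rintro ⟨a, b⟩ h
  rw [mem_chordedCycleEdges] at h
  omega

lemma chordedCycle_adj {u v : Fin n} :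
    (chordedCycle n).Adj u v ↔ u ≠ v ∧
      (((u : ℕ), (v : ℕ)) ∈ chordedCycleEdges n ∨ ((v : ℕ), (u : ℕ)) ∈ chordedCycleEdges n) :=
  fromRel_adj _ _ _

lemma cycleGraph_le_chordedCycle (n : ℕ) : cycleGraph n ≤ chordedCycle n := by
  have key : ∀ a b : Fin n, (a - b : Fin n).val = 1 →
      ((b : ℕ), (a : ℕ)) ∈ chordedCycleEdges n ∨ ((a : ℕ), (b : ℕ)) ∈ chordedCycleEdges n := by
    intro a b h
    rw [mem_chordedCycleEdges, mem_chordedCycleEdges]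
    rcases le_or_gt b a with hba | hab
    · rw [Fin.coe_sub_iff_le.2 hba] at h
      omega
    · rw [Fin.coe_sub_iff_lt.2 hab] at h
      omega
  intro u v h
  refine chordedCycle_adj.2 ⟨h.ne, ?_⟩
  rcases cycleGraph_adj'.1 h with h | h
  · exact (key u v h).symm
  · exact key v u h

lemma chordedCycle_connected (hn : 1 ≤ n) : (chordedCycle n).Connected :=
  (connected_iff _).2 ⟨cycleGraph_preconnected.mono (cycleGraph_le_chordedCycle n), ⟨⟨0, hn⟩⟩⟩

lemma exists_chord_across {x y : ℕ} (hn : 7 ≤ n) (hgap : x + 2 ≤ y) (hy : y < n)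
    (hwrap : ¬(x ≤ 1 ∧ y = n - 1)) :
    ∃ c, 1 ≤ c ∧ c + (n - 1) / 2 < n ∧
      (x < c ∧ c < y ∧ y < c + (n - 1) / 2 ∨
        c < x ∧ x < c + (n - 1) / 2 ∧ c + (n - 1) / 2 < y) := by
  by_cases hup : y + 1 < n ∧ x + 1 + (n - 1) / 2 < n
  · exact ⟨max (y + 1 - (n - 1) / 2) (x + 1), by omega⟩
  · exact ⟨min (x - 1) (y - 1 - (n - 1) / 2), by omega⟩

lemma chordedCycle_exists_adj_across (hn : 7 ≤ n) {x y : Fin n} (hxy : x < y)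
    (hadj : ¬(chordedCycle n).Adj x y) :
    ∃ u ∈ Set.Ioo x y, ∃ w ∉ Set.Icc x y, (chordedCycle n).Adj u w := by
  rw [chordedCycle_adj, mem_chordedCycleEdges, mem_chordedCycleEdges] at hadj
  rw [Fin.lt_def] at hxy
  obtain ⟨c, hc, hcn, hcross⟩ :=
    exists_chord_across (x := x) (y := y) hn (by omega) y.isLt (by omega)
  let u : Fin n := ⟨c, by omega⟩
  let w : Fin n := ⟨c + (n - 1) / 2, hcn⟩
  have hchord : (chordedCycle n).Adj u w :=
    chordedCycle_adj.2 ⟨Fin.ne_of_val_ne (by simp only [u, w]; omega),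
      .inl (mem_chordedCycleEdges.2 (.inr (.inr ⟨hc, rfl, hcn⟩)))⟩
  simp only [Set.mem_Ioo, Set.mem_Icc, Fin.lt_def, Fin.le_def, not_and_or, not_le]
  rcases hcross with hcross | hcross
  · exact ⟨u, by simp only [u]; omega, w, by simp only [w]; omega, hchord⟩
  · exact ⟨w, by simp only [w]; omega, u, by simp only [u]; omega, hchord.symm⟩

lemma chordedCycle_connected_induce_compl_pair (hn : 7 ≤ n) {x y : Fin n}
    (h : ¬(chordedCycle n).Adj x y) : ((chordedCycle n).induce {x, y}ᶜ).Connected := by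
  wlog hxy : x ≤ y generalizing x y
  · rw [Set.pair_comm]
    exact this (fun h' => h h'.symm) (le_of_not_ge hxy)
  rcases hxy.lt_or_eq with hxy | rfl
  · obtain ⟨u, hu, w, hw, huw⟩ := chordedCycle_exists_adj_across hn hxy h
    exact connected_induce_compl_pair (cycleGraph_le_chordedCycle n) hu hw huw
  · rw [Set.pair_eq_singleton]
    exact connected_induce_compl_singleton (cycleGraph_le_chordedCycle n) (by omega) x

lemma chordedCycle_connected_induce_compl (hn : 7 ≤ n) {S : Finset (Fin n)}
    (hS : S.card ≤ 2) (hind : ∀ a ∈ S, ∀ b ∈ S, ¬(chordedCycle n).Adj a b) :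
    ((chordedCycle n).induce (S : Set (Fin n))ᶜ).Connected := by
  rcases S.eq_empty_or_nonempty with rfl | hne
  · rw [Finset.coe_empty, Set.compl_empty]
    exact (induceUnivIso _).connected_iff.2 (chordedCycle_connected (by omega))
  · obtain ⟨x, hx, y, hy, rfl⟩ := Finset.exists_eq_pair_of_card_le_two hne hS
    rw [Finset.coe_pair]
    exact chordedCycle_connected_induce_compl_pair hn (hind x hx y hy)

lemma isVertexCut_chordedCycle (hn : 7 ≤ n) :
    IsVertexCut (chordedCycle n) {⟨1, by omega⟩, ⟨n - 1, by omega⟩} := by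
  set S : Finset (Fin n) := {⟨1, by omega⟩, ⟨n - 1, by omega⟩}
  have hS (v : Fin n) : v ∈ (S : Set (Fin n)) ↔ (v : ℕ) = 1 ∨ (v : ℕ) = n - 1 := by
    simp only [S, Finset.coe_insert, Finset.coe_singleton, Set.mem_insert_iff,
      Set.mem_singleton_iff, Fin.ext_iff]
  have h0 : (⟨0, by omega⟩ : Fin n) ∉ (S : Set (Fin n)) := by
    simp only [hS]
    omega
  refine ⟨fun h => h0 (h ▸ Set.mem_univ _), not_connected_induce_compl h0 (w := ⟨2, by omega⟩)
    (by simp only [hS]; omega) (Fin.ne_of_val_ne (show 0 ≠ 2 by omega)) fun v hv => ?_⟩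
  rw [mem_neighborSet, chordedCycle_adj, mem_chordedCycleEdges, mem_chordedCycleEdges] at hv
  simp only [ne_eq, Fin.ext_iff] at hv
  rw [hS]
  omega

end ChordedCycle

/-- For every `n ≥ 7` there is a connected graph of order `n` and size
`⌊3n/2⌋ + 1` with no independent minimum vertex cut. -/
theorem exists_graph_size_no_independent_minimum_vertex_cut
    (n : ℕ) (h7 : 7 ≤ n) :
    ∃ G : SimpleGraph (Fin n), G.Connected ∧ G.edgeSet.ncard = 3 * n / 2 + 1 ∧
      ¬ ∃ S : Finset (Fin n), IsVertexCut G S ∧ S.card = graphConnectivity G ∧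
        ∀ a ∈ S, ∀ b ∈ S, ¬ G.Adj a b := by
  refine ⟨chordedCycle n, chordedCycle_connected (by omega), ncard_edgeSet_chordedCycle h7, ?_⟩
  rintro ⟨S, hcut, hcard, hind⟩
  have hκ : graphConnectivity (chordedCycle n) ≤ 2 :=
    Nat.sInf_le ⟨_, isVertexCut_chordedCycle h7,
      Finset.card_pair (Fin.ne_of_val_ne (show 1 ≠ n - 1 by omega))⟩
  exact hcut.2 (chordedCycle_connected_induce_compl h7 (hcard.trans_le hκ) hind)
end

section
/- For every integer n ≥ 7 there exists a connected finite simple graph of order n and size exactly 2n + 1 that has no foresty minimum vertex cut; hence the size bound 2n in the preceding result is best possible. -/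
open SimpleGraph

open Finset

/-!
Let `m = n - 1` and take the square `C_m²` of the cycle on `ZMod m` (jumps `±1`, `±2`) together
with an apex joined to the triangle `{0, 1, 2}`; it has `2m + 3 = 2n + 1` edges. Between two
surviving vertices of `C_m²` there are two arcs; if at most three vertices are deleted, one arc
contains at most one of them and can be walked along with steps of length 1 and 2. Hence deleting
at most three vertices that do not include the whole triangle leaves the graph connected, while
the triangle, the neighbourhood of the apex, is a cut. So `κ = 3`, the triangle is the only
minimum vertex cut, and it is not a forest.
-/

def HasForestyMinimumVertexCut {V : Type*} [Fintype V] (G : SimpleGraph V) : Prop :=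
  ∃ S : Finset V, IsVertexCut G S ∧ S.card = graphConnectivity G ∧
    (G.induce (S : Set V)).IsAcyclic

theorem SimpleGraph.Iso.ncard_edgeSet_eq {V W : Type*} {G : SimpleGraph V}
    {G' : SimpleGraph W} (e : G ≃g G') : G'.edgeSet.ncard = G.edgeSet.ncard :=
  Nat.card_congr e.mapEdgeSet.symm

section Isomorphism

variable {V W : Type*} [Fintype V] [Fintype W] {G : SimpleGraph V} {G' : SimpleGraph W}

theorem IsVertexCut.map_iso (e : G ≃g G') {S : Finset V} (hS : IsVertexCut G S) :
    IsVertexCut G' (S.map e.toEquiv.toEmbedding) := by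
  have hcoe : ((S.map e.toEquiv.toEmbedding : Finset W) : Set W) = e.toEquiv '' S := by simp
  refine ⟨fun h => hS.1 ?_, fun h => hS.2 ?_⟩
  · rw [hcoe] at h
    rw [← e.toEquiv.symm_image_image S, h,
      Set.image_univ_of_surjective e.toEquiv.symm.surjective]
  · rw [hcoe, ← e.toEquiv.image_compl] at h
    exact (e.induce e.injective.injOn.bijOn_image).connected_iff.mpr h

theorem SimpleGraph.Iso.graphConnectivity_eq (e : G ≃g G') :
    graphConnectivity G' = graphConnectivity G := by
  unfold graphConnectivity
  congr 1
  ext k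
  constructor
  · rintro ⟨S, hS, rfl⟩
    exact ⟨S.map e.symm.toEquiv.toEmbedding, hS.map_iso e.symm, card_map _⟩
  · rintro ⟨S, hS, rfl⟩
    exact ⟨S.map e.toEquiv.toEmbedding, hS.map_iso e, card_map _⟩

theorem HasForestyMinimumVertexCut.map_iso (e : G ≃g G') (h : HasForestyMinimumVertexCut G) :
    HasForestyMinimumVertexCut G' := by
  obtain ⟨S, hcut, hcard, hacyc⟩ := h
  refine ⟨S.map e.toEquiv.toEmbedding, hcut.map_iso e,
    by rw [card_map, hcard, e.graphConnectivity_eq], ?_⟩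
  have hcoe : ((S.map e.toEquiv.toEmbedding : Finset W) : Set W) = e.toEquiv '' S := by simp
  rw [hcoe]
  exact (e.induce e.injective.injOn.bijOn_image).isAcyclic_iff.mp hacyc

end Isomorphism

section UniqueMinimumCut

variable {V : Type*} [Fintype V] {G : SimpleGraph V} {T : Finset V}

theorem IsVertexCut.eq_of_card_le
    (hconn : ∀ S : Finset V, S.card ≤ T.card → ¬ T ⊆ S →
      (G.induce (S : Set V)ᶜ).Connected)
    {S : Finset V} (hS : IsVertexCut G S) (hcard : S.card ≤ T.card) : S = T :=
  (eq_of_subset_of_card_le (not_not.mp fun h => hS.2 (hconn S hcard h)) hcard).symm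

theorem graphConnectivity_eq_card (hT : IsVertexCut G T)
    (hconn : ∀ S : Finset V, S.card ≤ T.card → ¬ T ⊆ S →
      (G.induce (S : Set V)ᶜ).Connected) :
    graphConnectivity G = T.card := by
  refine IsLeast.csInf_eq ⟨⟨T, hT, rfl⟩, ?_⟩
  rintro _ ⟨S, hS, rfl⟩
  by_contra! hlt
  exact hlt.ne (congrArg card (hS.eq_of_card_le hconn hlt.le))

theorem not_hasForestyMinimumVertexCut (hT : IsVertexCut G T)
    (hconn : ∀ S : Finset V, S.card ≤ T.card → ¬ T ⊆ S →
      (G.induce (S : Set V)ᶜ).Connected)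
    (hcyc : ¬ (G.induce (T : Set V)).IsAcyclic) : ¬ HasForestyMinimumVertexCut G := by
  rintro ⟨S, hS, hcard, hacyc⟩
  rw [graphConnectivity_eq_card hT hconn] at hcard
  exact hcyc (hS.eq_of_card_le hconn hcard.le ▸ hacyc)

theorem isVertexCut_of_neighborSet_subset {S : Finset V} {u v : V} (huv : u ≠ v)
    (hu : u ∉ S) (hv : v ∉ S) (hN : G.neighborSet u ⊆ S) : IsVertexCut G S := by
  refine ⟨fun h => hu (Finset.mem_coe.1 (h ▸ Set.mem_univ u)), fun h => ?_⟩
  have hreach := (reachable_iff_reflTransGen _ _).mp (h.preconnected ⟨u, hu⟩ ⟨v, hv⟩)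
  rcases hreach.cases_head with huv' | ⟨w, huw, -⟩
  · exact huv (congrArg Subtype.val huv')
  · exact w.2 (hN huw)

end UniqueMinimumCut

theorem not_isAcyclic_induce_of_isNClique_three {V : Type*} {G : SimpleGraph V} {s : Finset V}
    (hs : G.IsNClique 3 s) : ¬ (G.induce (s : Set V)).IsAcyclic := fun h =>
  h.cliqueFree le_rfl univ ⟨fun x _ y _ hxy => hs.1 x.2 y.2 (Subtype.coe_ne_coe.2 hxy),
    by simpa using hs.2⟩

section SquareOfCycle

variable {V : Type*} [DecidableEq V] {G : SimpleGraph V} (S : Finset V)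

theorem reachable_induce_compl_of_card_filter_mem_le_one (f : ℕ → V)
    (h1 : ∀ i, G.Adj (f i) (f (i + 1))) (h2 : ∀ i, G.Adj (f i) (f (i + 2)))
    {p q : ℕ} (hpq : p ≤ q) (hp : f p ∉ S) (hq : f q ∉ S)
    (hgap : ((Ioo p q).filter (f · ∈ S)).card ≤ 1) :
    (G.induce (S : Set V)ᶜ).Reachable ⟨f p, hp⟩ ⟨f q, hq⟩ := by
  rcases hpq.eq_or_lt with rfl | hlt
  · rfl
  have hgap_of_le {r : ℕ} (hr : p ≤ r) : ((Ioo r q).filter (f · ∈ S)).card ≤ 1 :=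
    (card_le_card (filter_subset_filter _ (Ioo_subset_Ioo_left hr))).trans hgap
  have step {j : ℕ} (hj : f j ∉ S) (h : G.Adj (f p) (f j)) :
      (G.induce (S : Set V)ᶜ).Reachable ⟨f p, hp⟩ ⟨f j, hj⟩ :=
    Adj.reachable (G := G.induce (S : Set V)ᶜ) h
  by_cases hp1 : f (p + 1) ∈ S
  · have hp2 : f (p + 2) ∉ S := by
      intro hp2
      have hne1 : p + 1 ≠ q := fun h => hq (h ▸ hp1)
      have hne2 : p + 2 ≠ q := fun h => hq (h ▸ hp2)
      have hsub : ({p + 1, p + 2} : Finset ℕ) ⊆ (Ioo p q).filter (f · ∈ S) := by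
        intro k hk
        simp only [mem_insert, mem_singleton] at hk
        rcases hk with rfl | rfl
        · exact mem_filter.2 ⟨mem_Ioo.2 ⟨by omega, by omega⟩, hp1⟩
        · exact mem_filter.2 ⟨mem_Ioo.2 ⟨by omega, by omega⟩, hp2⟩
      exact absurd ((card_le_card hsub).trans hgap) (by simp)
    have hle : p + 2 ≤ q := by
      by_contra!
      exact hq (by rwa [show q = p + 1 by omega])
    exact (step hp2 (h2 p)).trans <| reachable_induce_compl_of_card_filter_mem_le_one f h1 h2
      hle hp2 hq (hgap_of_le (by omega))
  · exact (step hp1 (h1 p)).trans <| reachable_induce_compl_of_card_filter_mem_le_one f h1 h2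
      hlt hp1 hq (hgap_of_le (by omega))
termination_by q - p

theorem reachable_induce_compl_of_card_le_three {m : ℕ} [NeZero m] (c : ZMod m → V)
    (hc : Function.Injective c) (h1 : ∀ x, G.Adj (c x) (c (x + 1)))
    (h2 : ∀ x, G.Adj (c x) (c (x + 2))) (hS : S.card ≤ 3) {a b : ZMod m}
    (ha : c a ∉ S) (hb : c b ∉ S) :
    (G.induce (S : Set V)ᶜ).Reachable ⟨c a, ha⟩ ⟨c b, hb⟩ := by
  set f : ℕ → V := fun k => c (a + k) with hf
  have hf1 (i : ℕ) : G.Adj (f i) (f (i + 1)) := by simpa [hf, add_assoc] using h1 (a + i)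
  have hf2 (i : ℕ) : G.Adj (f i) (f (i + 2)) := by simpa [hf, add_assoc] using h2 (a + i)
  set d := (b - a).val
  have hd : d < m := ZMod.val_lt _
  have hf0 : f 0 = c a := by simp [hf]
  have hfd : f d = c b := by simp [hf, d]
  have hfm : f m = c a := by simp [hf]
  have hinj : Set.InjOn f (Ioo 0 m) := by
    intro i hi j hj hij
    have := congrArg ZMod.val (add_left_cancel (hc hij))
    rwa [ZMod.val_cast_of_lt (mem_Ioo.1 hi).2, ZMod.val_cast_of_lt (mem_Ioo.1 hj).2] at this
  have hcount :
      ((Ioo 0 d).filter (f · ∈ S)).card + ((Ioo d m).filter (f · ∈ S)).card ≤ 3 := by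
    have hdisj : Disjoint (Ioo 0 d) (Ioo d m) :=
      disjoint_left.2 fun k hk hk' => by simp only [mem_Ioo] at hk hk'; omega
    rw [← card_union_of_disjoint (disjoint_filter_filter hdisj)]
    calc _ ≤ ((Ioo 0 m).filter (f · ∈ S)).card := by
          refine card_le_card (union_subset (filter_subset_filter _ ?_)
            (filter_subset_filter _ ?_))
          exacts [Ioo_subset_Ioo_right hd.le, Ioo_subset_Ioo_left (Nat.zero_le d)]
      _ ≤ S.card := card_le_card_of_injOn f (fun k hk => (mem_filter.1 hk).2)
          (hinj.mono (filter_subset _ _))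
      _ ≤ 3 := hS
  rcases le_or_gt ((Ioo 0 d).filter (f · ∈ S)).card 1 with hfwd | hbwd
  · convert reachable_induce_compl_of_card_filter_mem_le_one S f hf1 hf2 (Nat.zero_le d)
      (hf0 ▸ ha) (hfd ▸ hb) hfwd using 2 <;> simp [hf0, hfd]
  · convert (reachable_induce_compl_of_card_filter_mem_le_one S f hf1 hf2 hd.le
      (hfd ▸ hb) (hfm ▸ ha) (by omega)).symm using 2 <;> simp [hfm, hfd]

end SquareOfCycle

namespace SimpleGraph

variable {V : Type*} (G : SimpleGraph V) (T : Set V)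

def addApex : SimpleGraph (Option V) where
  Adj
    | some a, some b => G.Adj a b
    | none, some b => b ∈ T
    | some a, none => a ∈ T
    | none, none => False
  symm := ⟨by
    rintro (_ | a) (_ | b) h
    exacts [h, h, h, h.symm]⟩
  loopless := ⟨by
    rintro (_ | a) h
    exacts [h, G.loopless.irrefl a h]⟩

variable {G T}

@[simp] theorem addApex_adj_some_some {a b : V} :
    (G.addApex T).Adj (some a) (some b) ↔ G.Adj a b :=
  Iff.rfl

@[simp] theorem addApex_adj_none_some {b : V} : (G.addApex T).Adj none (some b) ↔ b ∈ T :=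
  Iff.rfl

@[simp] theorem addApex_adj_some_none {a : V} : (G.addApex T).Adj (some a) none ↔ a ∈ T :=
  Iff.rfl

theorem addApex_edgeSet : (G.addApex T).edgeSet =
    Sym2.map some '' G.edgeSet ∪ (fun t => s(none, some t)) '' T := by
  ext e
  induction e using Sym2.ind with
  | h u v =>
    cases u <;> cases v <;> simp [Sym2.exists, and_or_left, exists_or, G.adj_comm]

theorem ncard_edgeSet_addApex [Finite V] :
    (G.addApex T).edgeSet.ncard = G.edgeSet.ncard + T.ncard := by
  rw [addApex_edgeSet, Set.ncard_union_eq,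
    Set.ncard_image_of_injective _ (Sym2.map.injective (Option.some_injective V)),
    Set.ncard_image_of_injective]
  · intro s t h
    simpa using h
  · rw [Set.disjoint_left]
    rintro _ ⟨e, -, rfl⟩ ⟨t, -, h⟩
    induction e using Sym2.ind
    simp at h

end SimpleGraph

theorem ZMod.natCast_ne_zero_of_pos_of_lt {m k : ℕ} (h0 : 0 < k) (hk : k < m) :
    (k : ZMod m) ≠ 0 := by
  rw [Ne, ZMod.natCast_eq_zero_iff]
  exact Nat.not_dvd_of_pos_of_lt h0 hk

section SquareCycleApex

variable {m : ℕ}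

def squareCycleApex (m : ℕ) : SimpleGraph (Option (ZMod m)) :=
  (circulantGraph ({1, 2} : Set (ZMod m))).addApex {0, 1, 2}

theorem squareCycleApex_adj_some_add_one (hm : 2 ≤ m) (x : ZMod m) :
    (squareCycleApex m).Adj (some x) (some (x + 1)) := by
  have h1 : (1 : ZMod m) ≠ 0 := by exact_mod_cast ZMod.natCast_ne_zero_of_pos_of_lt one_pos hm
  simp [squareCycleApex, h1]

theorem squareCycleApex_adj_some_add_two (hm : 3 ≤ m) (x : ZMod m) :
    (squareCycleApex m).Adj (some x) (some (x + 2)) := by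
  have h2 : (2 : ZMod m) ≠ 0 := by exact_mod_cast ZMod.natCast_ne_zero_of_pos_of_lt two_pos hm
  simp [squareCycleApex, h2]

theorem degree_circulantGraph_one_two [NeZero m] (hm : 5 ≤ m) (x : ZMod m) :
    (circulantGraph ({1, 2} : Set (ZMod m))).degree x = 4 := by
  have hk {k : ℕ} (h0 : 0 < k) (hk : k < m) : (k : ZMod m) ≠ 0 :=
    ZMod.natCast_ne_zero_of_pos_of_lt h0 hk
  have h1 : (1 : ZMod m) ≠ 0 := by exact_mod_cast hk one_pos (by omega)
  have h2 : (2 : ZMod m) ≠ 0 := by exact_mod_cast hk two_pos (by omega)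
  have h3 : (3 : ZMod m) ≠ 0 := by exact_mod_cast hk three_pos (by omega)
  have h4 : (4 : ZMod m) ≠ 0 := by exact_mod_cast hk four_pos (by omega)
  have hN : (circulantGraph ({1, 2} : Set (ZMod m))).neighborFinset x =
      {x + 1, x + 2, x - 1, x - 2} := by
    ext y
    simp only [mem_neighborFinset, circulantGraph_adj, Set.mem_insert_iff,
      Set.mem_singleton_iff, mem_insert, mem_singleton]
    grind
  have h12 : (1 : ZMod m) ≠ 2 := fun h => h1 (by linear_combination -h)
  have h1n1 : (1 : ZMod m) ≠ -1 := fun h => h2 (by linear_combination h)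
  have h1n2 : (1 : ZMod m) ≠ -2 := fun h => h3 (by linear_combination h)
  have h2n1 : (2 : ZMod m) ≠ -1 := fun h => h3 (by linear_combination h)
  have h2n2 : (2 : ZMod m) ≠ -2 := fun h => h4 (by linear_combination h)
  have hn1n2 : (-1 : ZMod m) ≠ -2 := fun h => h1 (by linear_combination h)
  rw [← card_neighborFinset_eq_degree, hN, card_insert_of_notMem, card_insert_of_notMem,
    card_insert_of_notMem, card_singleton] <;>
    simp [sub_eq_add_neg, h12, h1n1, h1n2, h2n1, h2n2, hn1n2]

theorem ncard_edgeSet_circulantGraph_one_two [NeZero m] (hm : 5 ≤ m) :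
    (circulantGraph ({1, 2} : Set (ZMod m))).edgeSet.ncard = 2 * m := by
  have hsum := sum_degrees_eq_twice_card_edges (circulantGraph ({1, 2} : Set (ZMod m)))
  simp only [degree_circulantGraph_one_two hm, sum_const, card_univ, ZMod.card,
    smul_eq_mul] at hsum
  rw [← coe_edgeFinset, Set.ncard_coe_finset]
  omega

theorem ncard_edgeSet_squareCycleApex [NeZero m] (hm : 5 ≤ m) :
    (squareCycleApex m).edgeSet.ncard = 2 * m + 3 := by
  have h01 := (squareCycleApex_adj_some_add_one (m := m) (by omega) 0).ne
  have h02 := (squareCycleApex_adj_some_add_two (m := m) (by omega) 0).ne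
  have h12 := (squareCycleApex_adj_some_add_one (m := m) (by omega) 1).ne
  simp only [zero_add, one_add_one_eq_two, ne_eq, Option.some.injEq] at h01 h02 h12
  rw [squareCycleApex, ncard_edgeSet_addApex, ncard_edgeSet_circulantGraph_one_two hm,
    Set.ncard_eq_three.2 ⟨0, 1, 2, h01, h02, h12, rfl⟩]

theorem connected_induce_compl_squareCycleApex [NeZero m] (hm : 3 ≤ m)
    {S : Finset (Option (ZMod m))} (hS : S.card ≤ 3) (hT : ¬ {some 0, some 1, some 2} ⊆ S) :
    ((squareCycleApex m).induce (S : Set (Option (ZMod m)))ᶜ).Connected := by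
  obtain ⟨t, htT, htS⟩ := not_subset.1 hT
  obtain ⟨b, rfl, hb⟩ : ∃ b, t = some b ∧ (squareCycleApex m).Adj none (some b) := by
    simp only [mem_insert, mem_singleton] at htT
    rcases htT with rfl | rfl | rfl <;> exact ⟨_, rfl, by simp [squareCycleApex]⟩
  rw [connected_iff_exists_forall_reachable]
  refine ⟨⟨some b, htS⟩, ?_⟩
  rintro ⟨_ | a, hv⟩
  · have hadj : ((squareCycleApex m).induce (S : Set (Option (ZMod m)))ᶜ).Adj
        ⟨none, hv⟩ ⟨some b, htS⟩ := hb
    exact hadj.reachable.symm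
  · exact (reachable_induce_compl_of_card_le_three S some (Option.some_injective _)
      (squareCycleApex_adj_some_add_one (by omega)) (squareCycleApex_adj_some_add_two hm) hS
      hv htS).symm

theorem squareCycleApex_connected [NeZero m] (hm : 3 ≤ m) : (squareCycleApex m).Connected := by
  have h := connected_induce_compl_squareCycleApex hm (S := ∅) (by simp) (by simp)
  rw [coe_empty, Set.compl_empty] at h
  exact (induceUnivIso _).connected_iff.mp h

theorem not_hasForestyMinimumVertexCut_squareCycleApex [NeZero m] (hm : 4 ≤ m) :
    ¬ HasForestyMinimumVertexCut (squareCycleApex m) := by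
  have hk {k : ℕ} (h0 : 0 < k) (hk : k < m) : (k : ZMod m) ≠ 0 :=
    ZMod.natCast_ne_zero_of_pos_of_lt h0 hk
  have h31 : (3 : ZMod m) ≠ 1 := fun h =>
    hk two_pos (by omega) (by push_cast; linear_combination h)
  have h32 : (3 : ZMod m) ≠ 2 := fun h =>
    hk one_pos (by omega) (by push_cast; linear_combination h)
  have h30 : (3 : ZMod m) ≠ 0 := by exact_mod_cast hk three_pos (by omega)
  have hclique : (squareCycleApex m).IsNClique 3 {some 0, some 1, some 2} := by
    rw [is3Clique_triple_iff]
    have hadj1 := squareCycleApex_adj_some_add_one (m := m) (by omega)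
    have hadj2 := squareCycleApex_adj_some_add_two (m := m) (by omega)
    exact ⟨by simpa using hadj1 0, by simpa using hadj2 0,
      by simpa [one_add_one_eq_two] using hadj1 1⟩
  refine not_hasForestyMinimumVertexCut (T := {some 0, some 1, some 2}) ?_ ?_
    (not_isAcyclic_induce_of_isNClique_three hclique)
  · refine isVertexCut_of_neighborSet_subset (v := some 3) (Option.some_ne_none _).symm
      (by simp) (by simp [h30, h31, h32]) ?_
    rintro (_ | a) ha
    · exact absurd ha ((squareCycleApex m).irrefl (v := none))
    · simpa [squareCycleApex] using ha
  · intro S hS hT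
    rw [hclique.2] at hS
    exact connected_induce_compl_squareCycleApex (by omega) hS hT

end SquareCycleApex

/-- For every `n ≥ 7` there is a connected graph of order `n` and size
`2n + 1` with no foresty minimum vertex cut. -/
theorem exists_graph_size_no_foresty_minimum_vertex_cut
    (n : ℕ) (h7 : 7 ≤ n) :
    ∃ G : SimpleGraph (Fin n), G.Connected ∧ G.edgeSet.ncard = 2 * n + 1 ∧
      ¬ ∃ S : Finset (Fin n), IsVertexCut G S ∧ S.card = graphConnectivity G ∧
        (G.induce (S : Set (Fin n))).IsAcyclic := by
  obtain ⟨m, rfl⟩ : ∃ m, n = m + 1 := ⟨n - 1, by omega⟩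
  have : NeZero m := ⟨by omega⟩
  let e : Option (ZMod m) ≃ Fin (m + 1) := Fintype.equivFinOfCardEq (by simp [ZMod.card])
  let φ := Iso.map e (squareCycleApex m)
  refine ⟨_, φ.connected_iff.mp (squareCycleApex_connected (by omega)), ?_,
    fun (h : HasForestyMinimumVertexCut _) =>
      not_hasForestyMinimumVertexCut_squareCycleApex (by omega) (h.map_iso φ.symm)⟩
  rw [φ.ncard_edgeSet_eq, ncard_edgeSet_squareCycleApex (by omega)]
  ring
end

section
/- Every connected cubic (3-regular) finite simple graph of order at least eight has an independent minimum vertex cut, i.e., a vertex cut S with |S| = κ(G) that is an independent set of G. -/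
/-
Let `S` be a minimum cut containing an edge `ab`. By minimality every vertex of `S` has a neighbour
in each side of `G - S`, so in a cubic graph `a` and `b` each have a unique neighbour `x`, resp.
`y`, in the larger side `C`, and no neighbour in `S` but each other. The neighbourhood of a vertex
is a cut, so `|S| ≤ 3` and `S = {a, b} ∪ R` with `|R| ≤ 1`; at least eight vertices give
`|C| ≥ 3`. Now `x ≠ y`, since otherwise `{x} ∪ R` would be a smaller cut, and `(S \ {a}) ∪ {x}` is
again a minimum cut; it is independent unless the vertex `c ∈ R` is adjacent to `x`. Symmetrically
for `(S \ {b}) ∪ {y}`. If `c` is adjacent to both `x` and `y`, then every neighbour of `S` in `C`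
lies in `{x, y}`, which is then a cut of size two.
-/

open SimpleGraph

open Finset

theorem SimpleGraph.eq_or_eq_or_eq_of_ncard_neighborSet_eq_three {V : Type*} {G : SimpleGraph V}
    {v x y z w : V} (h : (G.neighborSet v).ncard = 3) (hx : G.Adj v x) (hy : G.Adj v y)
    (hz : G.Adj v z) (hxy : x ≠ y) (hxz : x ≠ z) (hyz : y ≠ z) (hw : G.Adj v w) :
    w = x ∨ w = y ∨ w = z := by
  have hsub : ({x, y, z} : Set V) ⊆ G.neighborSet v := by
    rintro u (rfl | rfl | rfl) <;> assumption
  have heq : ({x, y, z} : Set V) = G.neighborSet v :=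
    Set.eq_of_subset_of_ncard_le hsub
      (by rw [h, Set.ncard_eq_three.mpr ⟨x, y, z, hxy, hxz, hyz, rfl⟩])
      (Set.finite_of_ncard_ne_zero (by omega))
  have hw' : w ∈ G.neighborSet v := hw
  rw [← heq] at hw'
  simpa using hw'

theorem SimpleGraph.forall_not_adj_insert {V : Type*} [DecidableEq V] {G : SimpleGraph V}
    {s : Finset V} {x : V} :
    (∀ u ∈ insert x s, ∀ v ∈ insert x s, ¬ G.Adj u v) ↔
      (∀ v ∈ s, ¬ G.Adj x v) ∧ ∀ u ∈ s, ∀ v ∈ s, ¬ G.Adj u v := by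
  simp only [forall_mem_insert, SimpleGraph.irrefl, not_false_eq_true, true_and]
  constructor
  · exact fun h => ⟨h.1, fun u hu => (h.2 u hu).2⟩
  · exact fun h => ⟨h.1, fun u hu => ⟨fun hux => h.1 u hu hux.symm, h.2 u hu⟩⟩

section Connectivity

variable {V : Type*} [Fintype V] {G : SimpleGraph V} {T : Finset V}

def IsIndependentMinimumVertexCut (G : SimpleGraph V) (S : Finset V) : Prop :=
  IsVertexCut G S ∧ S.card = graphConnectivity G ∧ ∀ a ∈ S, ∀ b ∈ S, ¬ G.Adj a b

theorem graphConnectivity_le (h : IsVertexCut G T) : graphConnectivity G ≤ T.card :=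
  Nat.sInf_le ⟨T, h, rfl⟩

theorem IsVertexCut.exists_card_eq_graphConnectivity (h : IsVertexCut G T) :
    ∃ S, IsVertexCut G S ∧ S.card = graphConnectivity G :=
  Nat.sInf_mem (s := {k | ∃ S : Finset V, IsVertexCut G S ∧ S.card = k}) ⟨_, T, h, rfl⟩

end Connectivity

section CutSide

variable {V : Type*} [Fintype V] [DecidableEq V] {G : SimpleGraph V} {S T C R : Finset V}
  {a b x y c : V}

/-- `C` is a nonempty union of components of `G - S` that misses some vertex of `G - S`. -/
structure IsCutSide (G : SimpleGraph V) (S C : Finset V) : Prop where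
  nonempty : C.Nonempty
  disjoint : Disjoint S C
  nonempty_compl : (S ∪ C)ᶜ.Nonempty
  not_adj : ∀ ⦃x y⦄, x ∈ C → y ∉ S → y ∉ C → ¬ G.Adj x y

namespace IsCutSide

theorem isVertexCut (h : IsCutSide G S C) : IsVertexCut G S := by
  obtain ⟨x, hx⟩ := h.nonempty
  obtain ⟨y, hy⟩ := h.nonempty_compl
  simp only [mem_compl, mem_union, not_or] at hy
  have hxS : x ∉ S := disjoint_right.mp h.disjoint hx
  refine ⟨fun hS => hy.1 (Set.eq_univ_iff_forall.mp hS y), fun hconn => ?_⟩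
  obtain ⟨p⟩ := hconn.preconnected ⟨x, by simpa using hxS⟩ ⟨y, by simpa using hy.1⟩
  obtain ⟨d, -, hd₁, hd₂⟩ := p.exists_boundary_dart {z | z.1 ∈ C} hx hy.2
  exact h.not_adj hd₁ d.snd.2 hd₂ d.adj

theorem compl (h : IsCutSide G S C) : IsCutSide G S (S ∪ C)ᶜ where
  nonempty := h.nonempty_compl
  disjoint := disjoint_compl_right.mono_left subset_union_left
  nonempty_compl := by
    obtain ⟨x, hx⟩ := h.nonempty
    exact ⟨x, by simp [hx, disjoint_right.mp h.disjoint hx]⟩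
  not_adj x y hx hyS hyC hxy := by
    simp only [mem_compl, mem_union, not_or] at hx
    exact h.not_adj (by simpa [hyS] using hyC) hx.1 hx.2 hxy.symm

theorem card_add_card_add_card_compl (h : IsCutSide G S C) :
    S.card + C.card + (S ∪ C)ᶜ.card = Fintype.card V := by
  rw [← card_union_of_disjoint h.disjoint, card_add_card_compl]

theorem sdiff (h : IsCutSide G S C) (hC : ¬ C ⊆ T) (hS : ¬ S ⊆ T)
    (hT : ∀ y ∈ S, y ∉ T → ∀ x ∈ C, G.Adj y x → x ∈ T) : IsCutSide G T (C \ T) where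
  nonempty := by
    obtain ⟨x, hxC, hxT⟩ := not_subset.mp hC
    exact ⟨x, mem_sdiff.mpr ⟨hxC, hxT⟩⟩
  disjoint := disjoint_sdiff
  nonempty_compl := by
    obtain ⟨y, hyS, hyT⟩ := not_subset.mp hS
    exact ⟨y, by simp [hyT, disjoint_left.mp h.disjoint hyS]⟩
  not_adj x y hx hyT hyC hxy := by
    rw [mem_sdiff] at hx
    by_cases hyS : y ∈ S
    · exact hx.2 (hT y hyS hyT x hx.1 hxy.symm)
    · exact h.not_adj hx.1 hyS (fun hyC' => hyC (mem_sdiff.mpr ⟨hyC', hyT⟩)) hxy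

end IsCutSide

theorem IsVertexCut.exists_isCutSide (h : IsVertexCut G S) : ∃ C, IsCutSide G S C := by
  classical
  obtain ⟨hS, hconn⟩ := h
  obtain ⟨u, hu⟩ : ∃ u, u ∉ S := by
    by_contra! hall
    exact hS (by ext; simp [hall])
  have : Nonempty ((S : Set V)ᶜ : Set V) := ⟨⟨u, hu⟩⟩
  obtain ⟨x, y, hxy⟩ : ∃ x y, ¬ (G.induce (S : Set V)ᶜ).Reachable x y := by
    by_contra! h
    exact hconn ⟨h⟩
  refine ⟨univ.filter fun z => ∃ hz : z ∉ S, (G.induce (S : Set V)ᶜ).Reachable x ⟨z, hz⟩,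
    ⟨x, mem_filter.mpr ⟨mem_univ _, x.2, Reachable.refl _⟩⟩, ?_, ⟨y, ?_⟩, ?_⟩
  · exact disjoint_right.mpr fun z hz => (mem_filter.mp hz).2.1
  · simpa using ⟨y.2, fun _ => hxy⟩
  · rintro z w hz hwS hwC hzw
    obtain ⟨hzS, hr⟩ := (mem_filter.mp hz).2
    exact hwC (mem_filter.mpr ⟨mem_univ w, hwS, hr.trans (Adj.reachable hzw)⟩)

theorem IsVertexCut.exists_isCutSide_card_compl_le (h : IsVertexCut G S) :
    ∃ C, IsCutSide G S C ∧ (S ∪ C)ᶜ.card ≤ C.card := by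
  obtain ⟨C, hC⟩ := h.exists_isCutSide
  rcases le_total (S ∪ C)ᶜ.card C.card with hle | hle
  · exact ⟨C, hC, hle⟩
  · refine ⟨_, hC.compl, ?_⟩
    have hcompl : (S ∪ (S ∪ C)ᶜ)ᶜ = C := by
      ext x
      have : x ∈ C → x ∉ S := fun hx => disjoint_right.mp hC.disjoint hx
      simp only [mem_compl, mem_union, not_or]
      tauto
    rwa [hcompl]

theorem isCutSide_neighborFinset [DecidableRel G.Adj] (v : V)
    (h : G.degree v + 1 < Fintype.card V) : IsCutSide G (G.neighborFinset v) {v} where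
  nonempty := singleton_nonempty v
  disjoint := disjoint_singleton_right.mpr (by simp)
  nonempty_compl := by
    rw [← card_pos, card_compl]
    have := card_union_le (G.neighborFinset v) {v}
    rw [card_neighborFinset_eq_degree, card_singleton] at this
    omega
  not_adj x y hx hyN _ hxy := by
    rw [mem_singleton] at hx
    subst hx
    exact hyN ((mem_neighborFinset _ _ _).mpr hxy)

namespace IsCutSide

theorem card_le_card_of_forall_adj_mem (h : IsCutSide G S C)
    (hmin : S.card = graphConnectivity G) (hRS : R ⊆ S) (hTC : T ⊆ C)
    (hTC_card : T.card < C.card) (hRT : ∀ y ∈ R, ∀ x ∈ C, G.Adj y x → x ∈ T) :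
    R.card ≤ T.card := by
  obtain rfl | ⟨r, hr⟩ := R.eq_empty_or_nonempty
  · simp
  have hcut : IsVertexCut G (T ∪ S \ R) := by
    refine (h.sdiff ?_ ?_ ?_).isVertexCut
    · obtain ⟨x, hxC, hxT⟩ := exists_mem_notMem_of_card_lt_card hTC_card
      exact fun hsub => by
        simpa [hxT, disjoint_right.mp h.disjoint hxC] using hsub hxC
    · intro hsub
      have hrT : r ∈ T := by simpa [hr] using hsub (hRS hr)
      exact disjoint_left.mp h.disjoint (hRS hr) (hTC hrT)
    · intro y hyS hyT x hxC hyx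
      simp only [mem_union, mem_sdiff, hyS, true_and, not_or, not_not] at hyT
      exact mem_union_left _ (hRT y hyT.2 x hxC hyx)
  have := graphConnectivity_le hcut
  have := card_union_le T (S \ R)
  have := card_sdiff_of_subset hRS
  have := card_le_card hRS
  omega

theorem exists_adj (h : IsCutSide G S C) (hmin : S.card = graphConnectivity G) (ha : a ∈ S) :
    ∃ x ∈ C, G.Adj a x := by
  by_contra! hno
  have := h.card_le_card_of_forall_adj_mem hmin (singleton_subset_iff.mpr ha) (empty_subset C)
    (card_pos.mpr h.nonempty) (by simpa using hno)
  simp at this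

theorem isVertexCut_insert (h : IsCutSide G (insert a T) C)
    (hmin : (insert a T).card = graphConnectivity G) (haT : a ∉ T) (hx : x ∈ C)
    (hax : ∀ w ∈ C, G.Adj a w → w = x) (hC : 1 < C.card) :
    IsVertexCut G (insert x T) ∧ (insert x T).card = graphConnectivity G := by
  have hxS : x ∉ insert a T := disjoint_right.mp h.disjoint hx
  rw [mem_insert, not_or] at hxS
  refine ⟨(h.sdiff ?_ ?_ ?_).isVertexCut, ?_⟩
  · obtain ⟨z, hz, hzx⟩ := exists_mem_ne hC x
    have hzS : z ∉ insert a T := disjoint_right.mp h.disjoint hz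
    intro hsub
    exact hzS (mem_insert_of_mem (by simpa [hzx] using hsub hz))
  · intro hsub
    simpa [haT, Ne.symm hxS.1] using hsub (mem_insert_self a T)
  · intro y hy hyT w hw hyw
    obtain rfl : y = a := by simp_all
    simp [hax w hw hyw]
  · rw [card_insert_of_notMem hxS.2, ← hmin, card_insert_of_notMem haT]

theorem ne_of_forall_adj_eq (h : IsCutSide G S C) (hmin : S.card = graphConnectivity G)
    (hC : 1 < C.card) (ha : a ∈ S) (hb : b ∈ S) (hab : a ≠ b) (hx : x ∈ C)
    (hax : ∀ w ∈ C, G.Adj a w → w = x) (hby : ∀ w ∈ C, G.Adj b w → w = y) : x ≠ y := by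
  rintro rfl
  have := h.card_le_card_of_forall_adj_mem hmin (R := {a, b}) (T := {x})
    (by simp [insert_subset_iff, ha, hb]) (by simpa) (by simpa)
    (by simpa [forall_and] using ⟨hax, hby⟩)
  simp [hab] at this

theorem exists_unique_adj_of_adj (hdeg : (G.neighborSet a).ncard = 3) (h : IsCutSide G S C)
    (hmin : S.card = graphConnectivity G) (ha : a ∈ S) (hb : b ∈ S) (hab : G.Adj a b) :
    ∃ a₁ ∈ C, (∀ w ∈ C, G.Adj a w → w = a₁) ∧ ∀ w ∈ S, G.Adj a w → w = b := by
  obtain ⟨a₁, ha₁, haa₁⟩ := h.exists_adj hmin ha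
  obtain ⟨a₂, ha₂, haa₂⟩ := h.compl.exists_adj hmin ha
  have ha₁S : a₁ ∉ S := disjoint_right.mp h.disjoint ha₁
  simp only [mem_compl, mem_union, not_or] at ha₂
  have hN : ∀ w, G.Adj a w → w = b ∨ w = a₁ ∨ w = a₂ :=
    fun w => eq_or_eq_or_eq_of_ncard_neighborSet_eq_three hdeg hab haa₁ haa₂
      (by rintro rfl; exact ha₁S hb) (by rintro rfl; exact ha₂.1 hb)
      (by rintro rfl; exact ha₂.2 ha₁)
  refine ⟨a₁, ha₁, fun w hw haw => ?_, fun w hw haw => ?_⟩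
  · obtain rfl | rfl | rfl := hN w haw
    · exact absurd hw (disjoint_left.mp h.disjoint hb)
    · rfl
    · exact absurd hw ha₂.2
  · obtain rfl | rfl | rfl := hN w haw
    · rfl
    · exact absurd hw ha₁S
    · exact absurd hw ha₂.1

theorem eq_or_eq_of_adj_of_adj (hdeg : (G.neighborSet c).ncard = 3) (h : IsCutSide G S C)
    (hmin : S.card = graphConnectivity G) (hc : c ∈ S) (hx : x ∈ C) (hy : y ∈ C) (hxy : x ≠ y)
    (hcx : G.Adj c x) (hcy : G.Adj c y) : ∀ w ∈ C, G.Adj c w → w = x ∨ w = y := by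
  obtain ⟨z, hz, hcz⟩ := h.compl.exists_adj hmin hc
  have hxz : x ≠ z := by rintro rfl; simp [hx] at hz
  have hyz : y ≠ z := by rintro rfl; simp [hy] at hz
  intro w hw hcw
  obtain hwx | hwy | rfl :=
    eq_or_eq_or_eq_of_ncard_neighborSet_eq_three hdeg hcx hcy hcz hxy hxz hyz hcw
  · exact Or.inl hwx
  · exact Or.inr hwy
  · simp [hw] at hz

theorem isIndependentMinimumVertexCut_insert_insert (hdeg : (G.neighborSet b).ncard = 3)
    (h : IsCutSide G (insert a (insert b R)) C)
    (hmin : (insert a (insert b R)).card = graphConnectivity G) (hab : G.Adj a b) (haR : a ∉ R)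
    (hR : R.card ≤ 1) (hC : 1 < C.card) (hx : x ∈ C) (hax : ∀ w ∈ C, G.Adj a w → w = x)
    (hxR : ∀ r ∈ R, ¬ G.Adj x r) :
    IsIndependentMinimumVertexCut G (insert x (insert b R)) := by
  obtain ⟨y, hy, hby, hbS⟩ := h.exists_unique_adj_of_adj hdeg hmin (by simp) (by simp) hab.symm
  have hxy := h.ne_of_forall_adj_eq hmin hC (by simp) (by simp) hab.ne hx hax hby
  obtain ⟨hcut, hcard⟩ := h.isVertexCut_insert hmin (by simp [hab.ne, haR]) hx hax hC
  refine ⟨hcut, hcard, forall_not_adj_insert.mpr ⟨?_, forall_not_adj_insert.mpr ⟨?_, ?_⟩⟩⟩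
  · rw [forall_mem_insert]
    exact ⟨fun hxb => hxy (hby x hx hxb.symm), hxR⟩
  · exact fun r hr hbr => haR (hbS r (by simp [hr]) hbr ▸ hr)
  · intro u hu v hv
    rw [card_le_one.mp hR u hu v hv]
    exact G.irrefl

theorem exists_isIndependentMinimumVertexCut_of_adj (hcubic : ∀ v, (G.neighborSet v).ncard = 3)
    (h : IsCutSide G S C) (hmin : S.card = graphConnectivity G) (hS : S.card ≤ 3)
    (hC : 2 < C.card) (ha : a ∈ S) (hb : b ∈ S) (hab : G.Adj a b) :
    ∃ T, IsIndependentMinimumVertexCut G T := by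
  obtain ⟨R, haR, hbR, rfl⟩ : ∃ R, a ∉ R ∧ b ∉ R ∧ S = insert a (insert b R) :=
    ⟨(S.erase a).erase b, by simp, by simp, by
      rw [insert_erase (mem_erase.mpr ⟨hab.ne.symm, hb⟩), insert_erase ha]⟩
  have hcardS : (insert a (insert b R)).card = R.card + 2 := by
    rw [card_insert_of_notMem (by simp [hab.ne, haR]), card_insert_of_notMem hbR]
  have hR : R.card ≤ 1 := by omega
  obtain ⟨x, hx, hax, -⟩ := h.exists_unique_adj_of_adj (hcubic a) hmin (by simp) (by simp) hab
  obtain ⟨y, hy, hby, -⟩ :=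
    h.exists_unique_adj_of_adj (hcubic b) hmin (by simp) (by simp) hab.symm
  by_cases hxR : ∀ r ∈ R, ¬ G.Adj x r
  · exact ⟨_, h.isIndependentMinimumVertexCut_insert_insert (hcubic b) hmin hab haR hR
      (by omega) hx hax hxR⟩
  by_cases hyR : ∀ r ∈ R, ¬ G.Adj y r
  · rw [insert_comm] at h hmin
    exact ⟨_, h.isIndependentMinimumVertexCut_insert_insert (hcubic a) hmin hab.symm hbR hR
      (by omega) hy hby hyR⟩
  -- otherwise `x` and `y` have a common neighbour `c ∈ R`, and `{x, y}` is a smaller cut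
  push Not at hxR hyR
  obtain ⟨c, hc, hcx⟩ := hxR
  obtain ⟨c', hc', hcy⟩ := hyR
  obtain rfl := card_le_one.mp hR c hc c' hc'
  have hxy := h.ne_of_forall_adj_eq hmin (by omega) (by simp) (by simp) hab.ne hx hax hby
  have hcxy := h.eq_or_eq_of_adj_of_adj (hcubic c) hmin (by simp [hc]) hx hy hxy hcx.symm
    hcy.symm
  have hle := h.card_le_card_of_forall_adj_mem hmin subset_rfl (T := {x, y})
    (by simp [insert_subset_iff, hx, hy]) (by rw [card_pair hxy]; omega) ?_
  · have := card_pos.mpr ⟨c, hc⟩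
    rw [hcardS, card_pair hxy] at hle
    omega
  · intro u hu w hw huw
    obtain rfl | rfl | hu := mem_insert.mp hu |>.imp_right mem_insert.mp
    · simp [hax w hw huw]
    · simp [hby w hw huw]
    · obtain rfl := card_le_one.mp hR u hu c hc
      simpa using hcxy w hw huw

end IsCutSide

end CutSide

theorem cubic_independent_minimum_vertex_cut_general
    {V : Type*} [Fintype V] (G : SimpleGraph V)
    (hcubic : ∀ v : V, (G.neighborSet v).ncard = 3)
    (h8 : 8 ≤ Fintype.card V) :
    ∃ S : Finset V, IsVertexCut G S ∧ S.card = graphConnectivity G ∧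
      ∀ a ∈ S, ∀ b ∈ S, ¬ G.Adj a b := by
  classical
  obtain ⟨v⟩ : Nonempty V := Fintype.card_pos_iff.mp (by omega)
  have hdeg : G.degree v = 3 := by
    rw [← card_neighborFinset_eq_degree, neighborFinset_def, ← Set.ncard_eq_toFinset_card',
      hcubic v]
  have hN := (isCutSide_neighborFinset (G := G) v (by omega)).isVertexCut
  obtain ⟨S, hS, hSκ⟩ := hN.exists_card_eq_graphConnectivity
  by_cases hind : ∀ a ∈ S, ∀ b ∈ S, ¬ G.Adj a b
  · exact ⟨S, hS, hSκ, hind⟩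
  push Not at hind
  obtain ⟨a, ha, b, hb, hab⟩ := hind
  obtain ⟨C, hC, hCD⟩ := hS.exists_isCutSide_card_compl_le
  have hS3 : S.card ≤ 3 := hSκ ▸ hdeg ▸ graphConnectivity_le hN
  have hcount := hC.card_add_card_add_card_compl
  exact hC.exists_isIndependentMinimumVertexCut_of_adj hcubic hSκ hS3 (by omega) ha hb hab

/-- Every connected cubic graph of order at least eight has an independent
minimum vertex cut. -/
theorem cubic_independent_minimum_vertex_cut
    {V : Type*} [Fintype V] (G : SimpleGraph V)
    (hconn : G.Connected)
    (hcubic : ∀ v : V, (G.neighborSet v).ncard = 3)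
    (h8 : 8 ≤ Fintype.card V) :
    ∃ S : Finset V, IsVertexCut G S ∧ S.card = graphConnectivity G ∧
      ∀ a ∈ S, ∀ b ∈ S, ¬ G.Adj a b :=
  cubic_independent_minimum_vertex_cut_general G hcubic h8
end

section
/- Let G be a k-connected finite simple graph, let S be a vertex cut of G, and let H be a connected component of G − S with |V(H)| ≥ k. Then the set [S, V(H)] of edges of G with one endpoint in S and the other in V(H) contains a matching of cardinality k. -/
open SimpleGraph

/-- If `S` is a vertex cut of a `k`-connected graph `G` and `H` is a component
of `G - S` with `|H| ≥ k`, then the edge set `[S, V(H)]` contains a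
`k`-matching. -/
theorem vertex_cut_component_matching
    {V : Type*} [Fintype V] (G : SimpleGraph V) (k : ℕ)
    (hcard : k < Fintype.card V)
    (hkconn : ∀ X : Finset V, X.card < k → (G.induce ((X : Set V)ᶜ)).Connected)
    (S : Finset V) (hcut : IsVertexCut G S)
    (c : (G.induce ((S : Set V)ᶜ)).ConnectedComponent)
    (hH : k ≤ c.supp.ncard) :
    ∃ a b : Fin k → V,
      Function.Injective a ∧ Function.Injective b ∧
      (∀ i, a i ∈ S) ∧ (∀ i, b i ∈ Subtype.val '' c.supp) ∧
      (∀ i, G.Adj (a i) (b i)) ∧ ∀ i j, a i ≠ b j := by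
  classical
  set H : Set V := Subtype.val '' c.supp with hHdef
  -- |S| ≥ k
  have hSk : k ≤ S.card := by
    by_contra h
    push_neg at h
    exact hcut.2 (hkconn S h)
  -- ncard of H
  have hHcard : k ≤ H.ncard := by
    rwa [hHdef, Set.ncard_image_of_injective _ Subtype.val_injective]
  -- a vertex outside S and outside the component c
  obtain ⟨dv, hdv⟩ : ∃ dv : ↥((S : Set V)ᶜ), dv ∉ c.supp := by
    by_contra h
    push_neg at h
    apply hcut.2
    obtain ⟨v0⟩ := c.exists_rep
    rw [connected_iff]
    refine ⟨fun u w => ?_, ⟨v0⟩⟩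
    have hu : u ∈ c.supp := h u
    have hw : w ∈ c.supp := h w
    rw [ConnectedComponent.mem_supp_iff] at hu hw
    exact ConnectedComponent.exact (hu.trans hw.symm)
  have hdvH : (dv : V) ∉ H := by
    rintro ⟨x, hx, hxe⟩
    exact hdv (by rwa [Subtype.val_injective hxe] at hx)
  have hdvS : (dv : V) ∉ S := dv.2
  -- the neighbourhood function
  set NA : Finset ↥S → Finset V :=
    fun A => Finset.univ.filter (fun v => v ∈ H ∧ ∃ s ∈ A, G.Adj ↑s v) with hNAdef
  have hNAH : ∀ A, ∀ v ∈ NA A, v ∈ H := by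
    intro A v hv
    simp only [hNAdef, Finset.mem_filter] at hv
    exact hv.2.1
  -- key cut lemma
  have key : ∀ A : Finset ↥S, k ≤ (NA A).card + (S.card - A.card) := by
    intro A
    by_contra hcon
    push_neg at hcon
    set A' : Finset V := A.image Subtype.val with hA'def
    have hA'S : A' ⊆ S := by
      intro v hv
      simp only [hA'def, Finset.mem_image] at hv
      obtain ⟨s, _, rfl⟩ := hv
      exact s.2
    have hA'card : A'.card = A.card :=
      Finset.card_image_of_injective _ Subtype.val_injective
    set X : Finset V := (S \ A') ∪ NA A with hXdef
    have hXcard : X.card < k := by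
      have h1 : X.card ≤ (S \ A').card + (NA A).card := Finset.card_union_le _ _
      have h2 : (S \ A').card = S.card - A.card := by
        rw [Finset.card_sdiff_of_subset hA'S, hA'card]
      omega
    have hconn := hkconn X hXcard
    -- find a vertex of H outside X
    obtain ⟨hv, hhvH, hhvNA⟩ : ∃ v, v ∈ H ∧ v ∉ NA A := by
      by_contra h
      push_neg at h
      have : H ⊆ ↑(NA A) := fun v hv => h v hv
      have := Set.ncard_le_ncard this (NA A).finite_toSet
      rw [Set.ncard_coe_finset] at this
      omega
    have hhvS : hv ∉ S := by
      obtain ⟨x, _, hx⟩ := hhvH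
      intro h
      rw [← hx] at h
      exact x.2 (Finset.mem_coe.mpr h)
    have hhvX : hv ∈ ((X : Set V)ᶜ) := by
      simp only [Set.mem_compl_iff, Finset.mem_coe]
      intro hmem
      rw [hXdef, Finset.mem_union] at hmem
      rcases hmem with hmem | hmem
      · exact hhvS (Finset.mem_sdiff.mp hmem).1
      · exact hhvNA hmem
    have hdvX : (dv : V) ∈ ((X : Set V)ᶜ) := by
      simp only [Set.mem_compl_iff, Finset.mem_coe]
      intro hmem
      rw [hXdef, Finset.mem_union] at hmem
      rcases hmem with hmem | hmem
      · exact hdvS (Finset.mem_sdiff.mp hmem).1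
      · exact hdvH (hNAH A _ hmem)
    -- walk from hv to dv in G - X
    obtain ⟨p⟩ := hconn.preconnected ⟨hv, hhvX⟩ ⟨dv, hdvX⟩
    -- walk invariant: stays in H
    have inv : ∀ (u w : ↥((X : Set V)ᶜ)) (_ : (G.induce ((X : Set V)ᶜ)).Walk u w),
        (u : V) ∈ H → (w : V) ∈ H := by
      intro u w p
      induction p with
      | nil => exact fun h => h
      | @cons u' w' _ hadj _ ih =>
        intro huH
        apply ih
        have hadj' : G.Adj ↑u' ↑w' := hadj
        by_cases hwS : (w' : V) ∈ S
        · exfalso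
          -- w' ∈ S, not in X, so w' ∈ A', hence u' ∈ NA A, contradiction
          have hw'X : (w' : V) ∉ (S \ A' ∪ NA A : Finset V) := fun hm => w'.2 (by
            exact hm)
          rw [Finset.mem_union, Finset.mem_sdiff] at hw'X
          push_neg at hw'X
          have hwA' : (w' : V) ∈ A' := hw'X.1 hwS
          simp only [hA'def, Finset.mem_image] at hwA'
          obtain ⟨s, hsA, hse⟩ := hwA'
          have huNA : (u' : V) ∈ NA A := by
            simp only [hNAdef, Finset.mem_filter, Finset.mem_univ, true_and]
            exact ⟨huH, s, hsA, by rw [hse]; exact hadj'.symm⟩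
          have hu'X : (u' : V) ∉ (S \ A' ∪ NA A : Finset V) := fun hm => u'.2 (by
            exact hm)
          rw [Finset.mem_union, Finset.mem_sdiff] at hu'X
          push_neg at hu'X
          exact hu'X.2 huNA
        · -- w' ∉ S : adjacent within G - S, so same component
          obtain ⟨u₀, hu₀, hu₀e⟩ := huH
          have hw₀ : (w' : V) ∈ ((S : Set V)ᶜ) := hwS
          set w₀ : ↥((S : Set V)ᶜ) := ⟨w', hw₀⟩ with hw₀def
          have hadj₀ : (G.induce ((S : Set V)ᶜ)).Adj u₀ w₀ := by
            show G.Adj ↑u₀ ↑w₀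
            rw [hu₀e]
            exact hadj'
          have : w₀ ∈ c.supp := by
            rw [ConnectedComponent.mem_supp_iff] at hu₀ ⊢
            rw [← hu₀]
            exact ConnectedComponent.sound hadj₀.symm.reachable
          exact ⟨w₀, this, rfl⟩
    exact hdvH (inv _ _ p hhvH)
  -- set up Hall's theorem with d dummy vertices
  set d := S.card - k with hddef
  set t : ↥S → Finset (V ⊕ Fin d) := fun s =>
    ((Finset.univ.filter (fun v => v ∈ H ∧ G.Adj ↑s v)).image Sum.inl) ∪
      ((Finset.univ : Finset (Fin d)).image Sum.inr) with htdef
  have hall : ∀ A : Finset ↥S, A.card ≤ (A.biUnion t).card := by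
    intro A
    rcases A.eq_empty_or_nonempty with rfl | ⟨s₀, hs₀⟩
    · simp
    · have hsub : ((NA A).image Sum.inl ∪ ((Finset.univ : Finset (Fin d)).image Sum.inr))
          ⊆ A.biUnion t := by
        intro x hx
        rw [Finset.mem_union] at hx
        rcases hx with hx | hx
        · rw [Finset.mem_image] at hx
          obtain ⟨v, hv, rfl⟩ := hx
          simp only [hNAdef, Finset.mem_filter, Finset.mem_univ, true_and] at hv
          obtain ⟨hvH, s, hsA, hadj⟩ := hv
          rw [Finset.mem_biUnion]
          exact ⟨s, hsA, by
            simp only [htdef, Finset.mem_union, Finset.mem_image, Finset.mem_filter,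
              Finset.mem_univ, true_and]
            exact Or.inl ⟨v, ⟨hvH, hadj⟩, rfl⟩⟩
        · rw [Finset.mem_biUnion]
          exact ⟨s₀, hs₀, Finset.mem_union_right _ hx⟩
      have hdisj : Disjoint ((NA A).image Sum.inl)
          (((Finset.univ : Finset (Fin d)).image Sum.inr)) := by
        rw [Finset.disjoint_left]
        rintro x hx hy
        rw [Finset.mem_image] at hx hy
        obtain ⟨v, _, rfl⟩ := hx
        obtain ⟨i, _, h⟩ := hy
        exact Sum.inl_ne_inr h.symm
      have hcard2 : ((NA A).image Sum.inl ∪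
          ((Finset.univ : Finset (Fin d)).image Sum.inr)).card = (NA A).card + d := by
        rw [Finset.card_union_of_disjoint hdisj,
          Finset.card_image_of_injective _ Sum.inl_injective,
          Finset.card_image_of_injective _ Sum.inr_injective]
        simp [hddef]
      have := Finset.card_le_card hsub
      rw [hcard2] at this
      have hA := key A
      have hAle : A.card ≤ S.card := by
        have := Finset.card_le_card (Finset.subset_univ A)
        rwa [Finset.card_univ, Fintype.card_coe] at this
      omega
  obtain ⟨f, hfinj, hft⟩ := (Finset.all_card_le_biUnion_card_iff_exists_injective t).mp hall
  -- at least k indices map to real vertices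
  set T : Finset ↥S := Finset.univ.filter (fun s => (f s).isLeft) with hTdef
  have hTcard : k ≤ T.card := by
    by_contra hcon
    push_neg at hcon
    -- the complement maps injectively into Fin d
    set Tc : Finset ↥S := Finset.univ.filter (fun s => ¬ (f s).isLeft) with hTcdef
    have hg : ∀ s ∈ Tc, ∃ i : Fin d, f s = Sum.inr i := by
      intro s hs
      simp only [hTcdef, Finset.mem_filter, Finset.mem_univ, true_and] at hs
      cases hfs : f s with
      | inl v => exact absurd (by rw [hfs]; rfl) hs
      | inr i => exact ⟨i, rfl⟩
    have hTcd : Tc.card ≤ d := by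
      have h1 : Tc.image f ⊆ (Finset.univ : Finset (Fin d)).image Sum.inr := by
        intro x hx
        rw [Finset.mem_image] at hx
        obtain ⟨s, hs, rfl⟩ := hx
        obtain ⟨i, hi⟩ := hg s hs
        rw [hi, Finset.mem_image]
        exact ⟨i, Finset.mem_univ i, rfl⟩
      calc Tc.card = (Tc.image f).card := (Finset.card_image_of_injective _ hfinj).symm
        _ ≤ ((Finset.univ : Finset (Fin d)).image Sum.inr).card := Finset.card_le_card h1
        _ = d := by rw [Finset.card_image_of_injective _ Sum.inr_injective]; simp
    have hTtot : T.card + Tc.card = S.card := by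
      rw [hTdef, hTcdef, Finset.card_filter_add_card_filter_not,
        Finset.card_univ, Fintype.card_coe]
    omega
  obtain ⟨T', hT'sub, hT'card⟩ := Finset.exists_subset_card_eq hTcard
  set e : Fin k ≃ ↥T' := (T'.equivFinOfCardEq hT'card).symm with hedef
  have hprop : ∀ i : Fin k, ∃ v, f (e i : ↥S) = Sum.inl v ∧ v ∈ H ∧ G.Adj ↑(e i : ↥S) v := by
    intro i
    have hmem : ((e i : ↥S)) ∈ T := hT'sub (e i).2
    simp only [hTdef, Finset.mem_filter, Finset.mem_univ, true_and] at hmem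
    cases hfs : f (e i : ↥S) with
    | inr j => rw [hfs] at hmem; exact absurd hmem (by simp)
    | inl v =>
      refine ⟨v, rfl, ?_⟩
      have := hft (e i : ↥S)
      rw [hfs] at this
      simp only [htdef, Finset.mem_union, Finset.mem_image, Finset.mem_filter,
        Finset.mem_univ, true_and] at this
      rcases this with ⟨w, hw, hwe⟩ | ⟨j, hj⟩
      · rw [Sum.inl.injEq] at hwe
        rwa [← hwe]
      · exact absurd hj (by simp)
  choose b hbeq hbH hbadj using hprop
  refine ⟨fun i => ↑(e i : ↥S), b, ?_, ?_, ?_, ?_, ?_, ?_⟩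
  · intro i j hij
    have : (e i : ↥T') = (e j : ↥T') := Subtype.ext (Subtype.ext hij)
    exact e.injective this
  · intro i j hij
    have heq : f (e i : ↥S) = f (e j : ↥S) := by rw [hbeq i, hbeq j, hij]
    exact e.injective (Subtype.ext (hfinj heq))
  · exact fun i => (e i : ↥S).2
  · exact hbH
  · exact hbadj
  · intro i j h
    have h' : (↑(e i : ↥S) : V) = b j := h
    have h2 : b j ∉ S := by
      obtain ⟨x, _, hx⟩ := hbH j
      intro hmem
      rw [← hx] at hmem
      exact x.2 (Finset.mem_coe.mpr hmem)
    rw [← h'] at h2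
    exact h2 (e i : ↥S).2
end

section
/- Every connected 4-regular finite simple graph of order 6 has connectivity 4 and has no foresty minimum vertex cut; hence the lower bound seven on the order in the preceding result is sharp. -/
open SimpleGraph

/-- In a graph where adjacency is "different and not each other's mate", a four-cycle
shows non-acyclicity. -/
theorem aux_not_acyclic {W : Type*} (H : SimpleGraph W) (a b c d : W)
    (hab : H.Adj a b) (hbc : H.Adj b c) (hcd : H.Adj c d) (hda : H.Adj d a)
    (hac : a ≠ c) (hbd : b ≠ d) :
    ¬ H.IsAcyclic := by
  intro hac'
  exact hac' (Walk.cons hab (Walk.cons hbc (Walk.cons hcd (Walk.cons hda Walk.nil))))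
    (by
      rw [Walk.isCycle_def, Walk.isTrail_def]
      refine ⟨?_, by simp, ?_⟩
      · simp only [Walk.edges, List.nodup_cons, Sym2.eq_iff]
        have := hab.ne; have := hbc.ne; have := hcd.ne; have := hda.ne
        aesop
      · simp only [Walk.support, List.nodup_cons]
        have := hab.ne; have := hbc.ne; have := hcd.ne; have := hda.ne
        aesop)

theorem aux_mate {V : Type*} [Fintype V] (G : SimpleGraph V)
    (hreg : ∀ v : V, (G.neighborSet v).ncard = 4)
    (h6 : Fintype.card V = 6) :
    ∃ m : V → V, (∀ v, m v ≠ v) ∧ ∀ v w, G.Adj v w ↔ w ≠ v ∧ w ≠ m v := by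
  classical
  have hone : ∀ v : V, ∃ u, {w | w ≠ v ∧ ¬ G.Adj v w} = {u} := by
    intro v
    rw [← Set.ncard_eq_one]
    have heq : {w | w ≠ v ∧ ¬ G.Adj v w} = (insert v (G.neighborSet v))ᶜ := by
      ext w
      simp only [Set.mem_setOf_eq, Set.mem_compl_iff, Set.mem_insert_iff, mem_neighborSet]
      tauto
    have hins : (insert v (G.neighborSet v)).ncard = 5 := by
      rw [Set.ncard_insert_of_notMem (by simp) (Set.toFinite _), hreg v]
    have := Set.ncard_add_ncard_compl (insert v (G.neighborSet v)) (Set.toFinite _)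
      (Set.toFinite _)
    rw [heq]
    rw [hins, Nat.card_eq_fintype_card, h6] at this
    omega
  choose m hm using hone
  have hmem : ∀ v, m v ≠ v ∧ ¬ G.Adj v (m v) := by
    intro v
    have : m v ∈ {w | w ≠ v ∧ ¬ G.Adj v w} := by rw [hm v]; rfl
    exact this
  refine ⟨m, fun v => (hmem v).1, fun v w => ?_⟩
  constructor
  · intro h
    refine ⟨(G.ne_of_adj h).symm, ?_⟩
    rintro rfl
    exact (hmem v).2 h
  · rintro ⟨h1, h2⟩
    by_contra hna
    have : w ∈ {w | w ≠ v ∧ ¬ G.Adj v w} := ⟨h1, hna⟩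
    rw [hm v] at this
    exact h2 this

/-- Every connected 4-regular graph of order 6 has connectivity 4 and no
foresty minimum vertex cut. -/
theorem four_regular_order_six_no_foresty_minimum_vertex_cut
    {V : Type*} [Fintype V] (G : SimpleGraph V)
    (hconn : G.Connected)
    (hreg : ∀ v : V, (G.neighborSet v).ncard = 4)
    (h6 : Fintype.card V = 6) :
    graphConnectivity G = 4 ∧
      ¬ ∃ S : Finset V, IsVertexCut G S ∧ S.card = graphConnectivity G ∧
        (G.induce (S : Set V)).IsAcyclic := by
  classical
  obtain ⟨m, hmne, hadj⟩ := aux_mate G hreg h6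
  have hnadj : ∀ v, ¬ G.Adj v (m v) := by
    intro v h
    exact (hadj v (m v)).1 h |>.2 rfl
  have hmm : ∀ v, m (m v) = v := by
    intro v
    by_contra h
    exact hnadj v (((hadj (m v) v).2 ⟨(hmne v).symm, fun hv => h hv.symm⟩).symm)
  -- any induced subgraph on ≥ 3 vertices is connected
  have key : ∀ T : Set V, 3 ≤ T.ncard → (G.induce T).Connected := by
    intro T hT
    have hne : T.Nonempty := by
      rcases T.eq_empty_or_nonempty with h | h
      · simp [h] at hT
      · exact h
    rw [connected_iff]
    refine ⟨?_, by simpa using hne.to_subtype⟩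
    rintro ⟨u, hu⟩ ⟨v, hv⟩
    rcases eq_or_ne u v with rfl | huv
    · rfl
    by_cases hA : G.Adj u v
    · exact (Adj.reachable (by exact hA : (G.induce T).Adj ⟨u, hu⟩ ⟨v, hv⟩))
    · have hvmu : v = m u := by
        by_contra h
        exact hA ((hadj u v).2 ⟨huv.symm, h⟩)
      have hw : (T \ {u, v}).Nonempty := by
        by_contra h
        rw [Set.not_nonempty_iff_eq_empty, Set.diff_eq_empty] at h
        have := Set.ncard_le_ncard h (Set.toFinite _)
        rw [Set.ncard_pair huv] at this
        omega
      obtain ⟨w, hwT, hwuv⟩ := hw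
      simp only [Set.mem_insert_iff, Set.mem_singleton_iff, not_or] at hwuv
      have h1 : G.Adj u w := (hadj u w).2 ⟨hwuv.1, by rw [← hvmu]; exact hwuv.2⟩
      have h2 : G.Adj v w := (hadj v w).2 ⟨hwuv.2, by rw [hvmu, hmm]; exact hwuv.1⟩
      exact (Adj.reachable (by exact h1 : (G.induce T).Adj ⟨u, hu⟩ ⟨w, hwT⟩)).trans
        (Adj.reachable (by exact h2.symm : (G.induce T).Adj ⟨w, hwT⟩ ⟨v, hv⟩))
  -- the induced graph on two non-adjacent vertices is disconnected
  have disc2 : ∀ u : V, ¬ (G.induce ({u, m u} : Set V)).Connected := by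
    intro u hc
    have hbot : G.induce ({u, m u} : Set V) = ⊥ := by
      ext a b
      simp only [bot_adj, iff_false]
      intro h
      have hGab : G.Adj (a : V) (b : V) := h
      have ha : (a : V) = u ∨ (a : V) = m u := a.2
      have hb : (b : V) = u ∨ (b : V) = m u := b.2
      rcases ha with ha | ha <;> rcases hb with hb | hb <;> rw [ha, hb] at hGab
      · exact G.irrefl hGab
      · exact hnadj u hGab
      · exact hnadj u hGab.symm
      · exact G.irrefl hGab
    have hr := hc.preconnected ⟨u, by simp⟩ ⟨m u, by simp⟩
    rw [hbot, reachable_bot] at hr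
    exact hmne u (congrArg Subtype.val hr).symm
  -- a cut of size 4 exists
  have hVne : Nonempty V := by
    rw [← Fintype.card_pos_iff]; omega
  obtain ⟨v0⟩ := hVne
  set K := {k | ∃ S : Finset V, IsVertexCut G S ∧ S.card = k} with hK
  have h4K : 4 ∈ K := by
    refine ⟨({v0, m v0} : Finset V)ᶜ, ⟨?_, ?_⟩, ?_⟩
    · intro h
      have := (Set.eq_univ_iff_forall.mp h) v0
      simp at this
    · have hcoe : ((({v0, m v0} : Finset V)ᶜ : Finset V) : Set V)ᶜ = ({v0, m v0} : Set V) := by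
        rw [Finset.coe_compl, compl_compl]
        simp
      rw [hcoe]
      exact disc2 v0
    · rw [Finset.card_compl, h6, Finset.card_insert_of_notMem (by simpa using (hmne v0).symm),
        Finset.card_singleton]
  have hlb : ∀ k ∈ K, 4 ≤ k := by
    rintro k ⟨S, ⟨_, hdisc⟩, hcard⟩
    by_contra h
    push_neg at h
    have hT : ((S : Set V)ᶜ).ncard ≥ 3 := by
      have := Set.ncard_add_ncard_compl (S : Set V) (Set.toFinite _) (Set.toFinite _)
      rw [Set.ncard_coe_finset, hcard, Nat.card_eq_fintype_card, h6] at this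
      omega
    exact hdisc (key _ hT)
  have hκ : graphConnectivity G = 4 := by
    have h1 : sInf K ≤ 4 := Nat.sInf_le h4K
    have h2 : 4 ≤ sInf K := hlb _ (Nat.sInf_mem ⟨4, h4K⟩)
    rw [graphConnectivity, ← hK]
    omega
  refine ⟨hκ, ?_⟩
  rintro ⟨S, ⟨hprop, hdisc⟩, hcard, hacyc⟩
  rw [hκ] at hcard
  -- complement of S has exactly two elements
  have hT2 : ((S : Set V)ᶜ).ncard = 2 := by
    have := Set.ncard_add_ncard_compl (S : Set V) (Set.toFinite _) (Set.toFinite _)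
    rw [Set.ncard_coe_finset, hcard, Nat.card_eq_fintype_card, h6] at this
    omega
  obtain ⟨u, w, huw, hTeq⟩ := Set.ncard_eq_two.mp hT2
  -- u and w are non-adjacent, hence w = m u
  have hwmu : w = m u := by
    by_contra h
    have hA : G.Adj u w := (hadj u w).2 ⟨huw.symm, h⟩
    apply hdisc
    rw [hTeq, connected_iff]
    constructor
    · rintro ⟨a, ha⟩ ⟨b, hb⟩
      have hAw : (G.induce ({u, w} : Set V)).Adj ⟨u, by simp⟩ ⟨w, by simp⟩ := hA
      have key2 : ∀ z (hz : z ∈ ({u, w} : Set V)),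
          (G.induce ({u, w} : Set V)).Reachable ⟨u, by simp⟩ ⟨z, hz⟩ := by
        intro z hz
        rcases hz with rfl | rfl
        · rfl
        · exact Adj.reachable hAw
      exact ((key2 a ha).symm).trans (key2 b hb)
    · exact ⟨⟨u, by simp⟩⟩
  subst hwmu
  -- membership in S
  have hSmem : ∀ x, x ∈ S ↔ x ≠ u ∧ x ≠ m u := by
    intro x
    have : (x ∈ (S : Set V)) ↔ x ∉ ((S : Set V)ᶜ) := by simp
    rw [hTeq] at this
    simpa [not_or] using this
  -- pick x in S, then y in S distinct from x and m x
  have hSne : S.Nonempty := by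
    rw [← Finset.card_pos, hcard]; omega
  obtain ⟨x, hx⟩ := hSne
  have hy : (S \ ({x, m x} : Finset V)).Nonempty := by
    by_contra h
    rw [Finset.not_nonempty_iff_eq_empty, Finset.sdiff_eq_empty_iff_subset] at h
    have := Finset.card_le_card h
    have h2 : ({x, m x} : Finset V).card ≤ 2 := Finset.card_insert_le _ _ |>.trans (by simp)
    omega
  obtain ⟨y, hy⟩ := hy
  rw [Finset.mem_sdiff, Finset.mem_insert, Finset.mem_singleton] at hy
  obtain ⟨hyS, hyx⟩ := hy
  push_neg at hyx
  obtain ⟨hyx, hymx⟩ := hyx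
  have hxS := (hSmem x).1 hx
  have hyS' := (hSmem y).1 hyS
  have hmxS : m x ∈ S := by
    rw [hSmem]
    constructor
    · intro h; exact hxS.2 (by rw [← h, hmm])
    · intro h; exact hxS.1 (by have := congrArg m h; rwa [hmm, hmm] at this)
  have hmyS : m y ∈ S := by
    rw [hSmem]
    constructor
    · intro h; exact hyS'.2 (by rw [← h, hmm])
    · intro h; exact hyS'.1 (by have := congrArg m h; rwa [hmm, hmm] at this)
  -- distinctness
  have hxmy : x ≠ m y := fun h => hymx (by rw [h, hmm])
  have hmxmy : m x ≠ m y := fun h => hyx (show x = y by have := congrArg m h; rwa [hmm, hmm] at this).symm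
  -- adjacencies
  have h1 : G.Adj x y := (hadj x y).2 ⟨hyx, hymx⟩
  have h2 : G.Adj y (m x) := (hadj y (m x)).2 ⟨hymx.symm, hmxmy⟩
  have h3 : G.Adj (m x) (m y) := (hadj (m x) (m y)).2 ⟨hmxmy.symm, by rw [hmm]; exact hxmy.symm⟩
  have h4 : G.Adj (m y) x := (hadj (m y) x).2 ⟨hxmy, by rw [hmm]; exact hyx.symm⟩
  -- the four-cycle in the induced graph on S
  have hxm : x ∈ (S : Set V) := hx
  have hym : y ∈ (S : Set V) := hyS
  have hmxm : m x ∈ (S : Set V) := hmxS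
  have hmym : m y ∈ (S : Set V) := hmyS
  have H1 : (G.induce (S : Set V)).Adj ⟨x, hxm⟩ ⟨y, hym⟩ := h1
  have H2 : (G.induce (S : Set V)).Adj ⟨y, hym⟩ ⟨m x, hmxm⟩ := h2
  have H3 : (G.induce (S : Set V)).Adj ⟨m x, hmxm⟩ ⟨m y, hmym⟩ := h3
  have H4 : (G.induce (S : Set V)).Adj ⟨m y, hmym⟩ ⟨x, hxm⟩ := h4
  exact aux_not_acyclic (G.induce (S : Set V)) _ _ _ _ H1 H2 H3 H4
    (by simp only [ne_eq, Subtype.mk.injEq]; exact fun h => hmne x h.symm)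
    (by simp only [ne_eq, Subtype.mk.injEq]; exact fun h => hmne y h.symm) hacyc
end

section
/- Every connected cubic (3-regular) finite simple graph G of order at least 8 with connectivity κ(G) = 3 has an independent vertex cut of cardinality 3. -/
open SimpleGraph

/-- A predicate preserved along edges is preserved along reachability. -/
lemma walk_pred {W : Type*} {H : SimpleGraph W} (P : W → Prop)
    (hP : ∀ x y, H.Adj x y → P x → P y) {x y : W} (h : H.Reachable x y) :
    P x → P y := by
  obtain ⟨w⟩ := h
  induction w with
  | nil => exact id
  | cons h p ih => exact fun hx => ih (hP _ _ h hx)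

/-- If the complement of `S` splits into a nonempty `P`-part and a nonempty
non-`P`-part with no `G`-edges leaving the `P`-part (except into `S`),
then `S` is a vertex cut. -/
lemma cut_of_partition {V : Type*} [Fintype V] (G : SimpleGraph V) (S : Finset V)
    {c w : V} (P : V → Prop) (hc : c ∉ S) (hw : w ∉ S) (hcP : P c) (hwP : ¬ P w)
    (hclosed : ∀ x y, P x → G.Adj x y → y ∉ S → P y) : IsVertexCut G S := by
  constructor
  · intro h
    have hcmem : c ∈ (S : Set V) := by rw [h]; trivial
    exact hc (by simpa using hcmem)
  · intro hcon
    have hcmem : c ∈ ((S : Set V)ᶜ) := by simpa using hc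
    have hwmem : w ∈ ((S : Set V)ᶜ) := by simpa using hw
    have hr : (G.induce ((S : Set V)ᶜ)).Reachable ⟨c, hcmem⟩ ⟨w, hwmem⟩ :=
      hcon.preconnected _ _
    apply hwP
    refine walk_pred (fun z => P z.1) ?_ hr hcP
    rintro ⟨x, hx⟩ ⟨y, hy⟩ hxy hPx
    have hadj : G.Adj x y := by simpa using hxy
    exact hclosed x y hPx hadj (by simpa using hy)

/-- There is no "cut" of size at most 2 when the connectivity is 3. -/
lemma no_small_cut {V : Type*} [Fintype V] (G : SimpleGraph V)
    (hk : graphConnectivity G = 3) (B C : Finset V)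
    (hdisj : ∀ x ∈ C, x ∉ B) (hCne : C.Nonempty)
    (hw : ∃ w, w ∉ C ∧ w ∉ B)
    (hclosed : ∀ x ∈ C, ∀ y, G.Adj x y → y ∈ C ∨ y ∈ B)
    (hB : B.card ≤ 2) : False := by
  classical
  obtain ⟨c, hcC⟩ := hCne
  obtain ⟨w, hwC, hwB⟩ := hw
  have hcut : IsVertexCut G B := by
    refine cut_of_partition G B (P := (· ∈ C)) (hdisj c hcC) hwB hcC hwC ?_
    intro x y hx hxy hyB
    exact (hclosed x hx y hxy).resolve_right hyB
  have h3 : 3 ≤ B.card := hk ▸ Nat.sInf_le ⟨B, hcut, rfl⟩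
  omega

lemma exists_outside {V : Type*} [Fintype V] (F : Finset V)
    (h : F.card < Fintype.card V) : ∃ w, w ∉ F := by
  by_contra h'
  push_neg at h'
  have : F = Finset.univ := Finset.eq_univ_iff_forall.2 h'
  rw [this, Finset.card_univ] at h
  omega

lemma third_nbr {V : Type*} [Fintype V] (G : SimpleGraph V) [DecidableEq V]
    [∀ v : V, Fintype (G.neighborSet v)]
    (hd : ∀ v : V, (G.neighborFinset v).card = 3)
    (u p q : V) (hp : G.Adj u p) (hq : G.Adj u q) (hpq : p ≠ q) :
    ∃ e, G.neighborFinset u = {p, q, e} ∧ e ≠ p ∧ e ≠ q ∧ e ≠ u := by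
  have hsub : ({p, q} : Finset V) ⊆ G.neighborFinset u := by
    intro y hy
    simp only [Finset.mem_insert, Finset.mem_singleton] at hy
    rcases hy with rfl | rfl
    · exact (G.mem_neighborFinset u y).2 hp
    · exact (G.mem_neighborFinset u y).2 hq
  have hpq2 : ({p, q} : Finset V).card = 2 := by
    rw [Finset.card_insert_of_notMem (by simpa using hpq), Finset.card_singleton]
  have hne : (G.neighborFinset u \ {p, q}).Nonempty := by
    rw [← Finset.card_pos, Finset.card_sdiff_of_subset hsub, hd u, hpq2]
    omega
  obtain ⟨e, he⟩ := hne
  rw [Finset.mem_sdiff] at he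
  obtain ⟨heN, hePQ⟩ := he
  simp only [Finset.mem_insert, Finset.mem_singleton, not_or] at hePQ
  have heu : e ≠ u := ((G.mem_neighborFinset u e).1 heN).ne'
  have hsub2 : ({p, q, e} : Finset V) ⊆ G.neighborFinset u := by
    intro y hy
    simp only [Finset.mem_insert, Finset.mem_singleton] at hy
    rcases hy with rfl | rfl | rfl
    · exact (G.mem_neighborFinset u y).2 hp
    · exact (G.mem_neighborFinset u y).2 hq
    · exact heN
  have hcard3 : ({p, q, e} : Finset V).card = 3 := by
    rw [Finset.card_insert_of_notMem (by simp [hpq, Ne.symm hePQ.1]),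
      Finset.card_insert_of_notMem (by simp [Ne.symm hePQ.2]), Finset.card_singleton]
  have := Finset.eq_of_subset_of_card_le hsub2 (by rw [hd u, hcard3])
  exact ⟨e, this.symm, hePQ.1, hePQ.2, heu⟩

section Triangle

variable {V : Type*} [Fintype V] [DecidableEq V] (G : SimpleGraph V)
  [∀ v : V, Fintype (G.neighborSet v)]

/-- The external neighbours of two vertices of a triangle are distinct. -/
lemma ext_distinct (hk : graphConnectivity G = 3)
    (hd : ∀ v : V, (G.neighborFinset v).card = 3) (h8 : 8 ≤ Fintype.card V)
    {a b c ea eb ec : V}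
    (hab : G.Adj a b) (hac : G.Adj a c) (hbc : G.Adj b c)
    (hNa : G.neighborFinset a = {b, c, ea})
    (hNb : G.neighborFinset b = {a, c, eb})
    (hNc : G.neighborFinset c = {a, b, ec}) : ea ≠ eb := by
  intro h
  subst h
  set e := ea with he
  have haea : G.Adj a e := (G.mem_neighborFinset a e).1 (by rw [hNa]; simp)
  have hbea : G.Adj b e := (G.mem_neighborFinset b e).1 (by rw [hNb]; simp)
  obtain ⟨z, hNe, _, _, _⟩ := third_nbr G hd e a b haea.symm hbea.symm hab.ne
  set C : Finset V := {a, b, c, e} with hC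
  set B : Finset V := ({ec, z} : Finset V) \ C with hBdef
  have hmem : ∀ y, y ∈ C ∨ y ∈ ({ec, z} : Finset V) → y ∈ C ∨ y ∈ B := by
    intro y hy
    rcases hy with hy | hy
    · exact Or.inl hy
    · by_cases hyC : y ∈ C
      · exact Or.inl hyC
      · exact Or.inr (Finset.mem_sdiff.2 ⟨hy, hyC⟩)
  refine no_small_cut G hk B C (fun x hx hxB => (Finset.mem_sdiff.1 hxB).2 hx)
    ⟨a, by simp [hC]⟩ ?_ ?_ ?_
  · have hF : ({a, b, c, e, ec, z} : Finset V).card < Fintype.card V := by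
      have h1 := Finset.card_insert_le a ({b, c, e, ec, z} : Finset V)
      have h2 := Finset.card_insert_le b ({c, e, ec, z} : Finset V)
      have h3 := Finset.card_insert_le c ({e, ec, z} : Finset V)
      have h4 := Finset.card_insert_le e ({ec, z} : Finset V)
      have h5 := Finset.card_insert_le ec ({z} : Finset V)
      have h6 : ({z} : Finset V).card = 1 := Finset.card_singleton z
      omega
    obtain ⟨w, hwF⟩ := exists_outside _ hF
    refine ⟨w, ?_, ?_⟩
    · intro hwC
      apply hwF
      simp only [hC, Finset.mem_insert, Finset.mem_singleton] at hwC ⊢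
      tauto
    · intro hwB
      have := (Finset.mem_sdiff.1 hwB).1
      apply hwF
      simp only [Finset.mem_insert, Finset.mem_singleton] at this ⊢
      tauto
  · intro x hx y hxy
    have hyN : y ∈ G.neighborFinset x := (G.mem_neighborFinset x y).2 hxy
    simp only [hC, Finset.mem_insert, Finset.mem_singleton] at hx
    rcases hx with rfl | rfl | rfl | rfl
    · rw [hNa] at hyN
      simp only [Finset.mem_insert, Finset.mem_singleton] at hyN
      apply hmem
      left
      simp only [hC, Finset.mem_insert, Finset.mem_singleton]
      tauto
    · rw [hNb] at hyN
      simp only [Finset.mem_insert, Finset.mem_singleton] at hyN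
      apply hmem
      left
      simp only [hC, Finset.mem_insert, Finset.mem_singleton]
      tauto
    · rw [hNc] at hyN
      simp only [Finset.mem_insert, Finset.mem_singleton] at hyN
      apply hmem
      rcases hyN with rfl | rfl | rfl
      · left; simp [hC]
      · left; simp [hC]
      · right; simp
    · rw [hNe] at hyN
      simp only [Finset.mem_insert, Finset.mem_singleton] at hyN
      apply hmem
      rcases hyN with rfl | rfl | rfl
      · left; simp [hC]
      · left; simp [hC]
      · right; simp
  · calc B.card ≤ ({ec, z} : Finset V).card := Finset.card_le_card (Finset.sdiff_subset)
      _ ≤ 2 := by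
        have h5 := Finset.card_insert_le ec ({z} : Finset V)
        have h6 : ({z} : Finset V).card = 1 := Finset.card_singleton z
        omega

set_option maxHeartbeats 1000000 in
/-- The external neighbours of two vertices of a triangle are non-adjacent
(when every vertex lies in a triangle). -/
lemma ext_nonadj (hk : graphConnectivity G = 3)
    (hd : ∀ v : V, (G.neighborFinset v).card = 3) (h8 : 8 ≤ Fintype.card V)
    (htri : ∀ v : V, ∃ p q, G.Adj v p ∧ G.Adj v q ∧ G.Adj p q)
    {a b c ea eb ec : V}
    (hab : G.Adj a b) (hac : G.Adj a c) (hbc : G.Adj b c)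
    (hNa : G.neighborFinset a = {b, c, ea})
    (hNb : G.neighborFinset b = {a, c, eb})
    (hNc : G.neighborFinset c = {a, b, ec})
    (hea1 : ea ≠ b) (hea2 : ea ≠ c)
    (heb1 : eb ≠ a) (heb2 : eb ≠ c)
    (hec1 : ec ≠ a) (hec2 : ec ≠ b)
    (d12 : ea ≠ eb) (d13 : ea ≠ ec) : ¬ G.Adj ea eb := by
  intro hadj
  have haea : G.Adj a ea := (G.mem_neighborFinset a ea).1 (by rw [hNa]; simp)
  have hbeb : G.Adj b eb := (G.mem_neighborFinset b eb).1 (by rw [hNb]; simp)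
  have hceg : G.Adj c ec := (G.mem_neighborFinset c ec).1 (by rw [hNc]; simp)
  obtain ⟨p, q, h1, h2, h3⟩ := htri ea
  -- `a` cannot be one of `p`, `q`
  have hap : a ≠ p := by
    rintro rfl
    have hq : q ∈ G.neighborFinset a := (G.mem_neighborFinset a q).2 h3
    rw [hNa] at hq
    simp only [Finset.mem_insert, Finset.mem_singleton] at hq
    rcases hq with rfl | rfl | rfl
    · -- q = b : then ea ∈ N(b)
      have : ea ∈ G.neighborFinset q := (G.mem_neighborFinset q ea).2 h2.symm
      rw [hNb] at this
      simp only [Finset.mem_insert, Finset.mem_singleton] at this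
      rcases this with rfl | rfl | rfl
      · exact haea.ne rfl
      · exact hea2 rfl
      · exact d12 rfl
    · have : ea ∈ G.neighborFinset q := (G.mem_neighborFinset q ea).2 h2.symm
      rw [hNc] at this
      simp only [Finset.mem_insert, Finset.mem_singleton] at this
      rcases this with rfl | rfl | rfl
      · exact haea.ne rfl
      · exact hea1 rfl
      · exact d13 rfl
    · exact h2.ne' rfl
  have haq : a ≠ q := by
    rintro rfl
    have hp' : p ∈ G.neighborFinset a := (G.mem_neighborFinset a p).2 h3.symm
    rw [hNa] at hp'
    simp only [Finset.mem_insert, Finset.mem_singleton] at hp'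
    rcases hp' with rfl | rfl | rfl
    · have : ea ∈ G.neighborFinset p := (G.mem_neighborFinset p ea).2 h1.symm
      rw [hNb] at this
      simp only [Finset.mem_insert, Finset.mem_singleton] at this
      rcases this with rfl | rfl | rfl
      · exact haea.ne rfl
      · exact hea2 rfl
      · exact d12 rfl
    · have : ea ∈ G.neighborFinset p := (G.mem_neighborFinset p ea).2 h1.symm
      rw [hNc] at this
      simp only [Finset.mem_insert, Finset.mem_singleton] at this
      rcases this with rfl | rfl | rfl
      · exact haea.ne rfl
      · exact hea1 rfl
      · exact d13 rfl
    · exact h1.ne' rfl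
  -- N(ea) = {p, q, a}
  have hNea : G.neighborFinset ea = {p, q, a} := by
    have hsub : ({p, q, a} : Finset V) ⊆ G.neighborFinset ea := by
      intro y hy
      simp only [Finset.mem_insert, Finset.mem_singleton] at hy
      rcases hy with rfl | rfl | rfl
      · exact (G.mem_neighborFinset ea y).2 h1
      · exact (G.mem_neighborFinset ea y).2 h2
      · exact (G.mem_neighborFinset ea y).2 haea.symm
    have hcard3 : ({p, q, a} : Finset V).card = 3 := by
      rw [Finset.card_insert_of_notMem (by simp [h3.ne, Ne.symm hap]),
        Finset.card_insert_of_notMem (by simp [Ne.symm haq]), Finset.card_singleton]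
    exact (Finset.eq_of_subset_of_card_le hsub (by rw [hd ea, hcard3])).symm
  -- eb is p or q
  have hebpq : eb = p ∨ eb = q := by
    have : eb ∈ G.neighborFinset ea := (G.mem_neighborFinset ea eb).2 hadj
    rw [hNea] at this
    simp only [Finset.mem_insert, Finset.mem_singleton] at this
    rcases this with h | h | h
    · exact Or.inl h
    · exact Or.inr h
    · exact absurd h heb1
  -- main argument, with r the third vertex of ea's triangle
  have main : ∀ r : V, G.Adj ea r → G.Adj eb r →
      (∀ y, G.Adj ea y → y = a ∨ y = eb ∨ y = r) → False := by
    intro r hear hebr hNea'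
    have hrb : r ≠ b := by
      rintro rfl
      have : ea ∈ G.neighborFinset r := (G.mem_neighborFinset r ea).2 hear.symm
      rw [hNb] at this
      simp only [Finset.mem_insert, Finset.mem_singleton] at this
      rcases this with rfl | rfl | rfl
      · exact haea.ne rfl
      · exact hea2 rfl
      · exact d12 rfl
    -- N(eb) = {ea, r, b}
    have hNeb : G.neighborFinset eb = {ea, r, b} := by
      have hsub : ({ea, r, b} : Finset V) ⊆ G.neighborFinset eb := by
        intro y hy
        simp only [Finset.mem_insert, Finset.mem_singleton] at hy
        rcases hy with rfl | rfl | rfl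
        · exact (G.mem_neighborFinset eb y).2 hadj.symm
        · exact (G.mem_neighborFinset eb y).2 hebr
        · exact (G.mem_neighborFinset eb y).2 hbeb.symm
      have hcard3 : ({ea, r, b} : Finset V).card = 3 := by
        rw [Finset.card_insert_of_notMem (by simp [hear.ne, hea1]),
          Finset.card_insert_of_notMem (by simp [hrb]), Finset.card_singleton]
      exact (Finset.eq_of_subset_of_card_le hsub (by rw [hd eb, hcard3])).symm
    set C : Finset V := {a, b, c, ea, eb} with hC
    set B : Finset V := ({ec, r} : Finset V) \ C with hBdef
    have hmem : ∀ y, y ∈ C ∨ y ∈ ({ec, r} : Finset V) → y ∈ C ∨ y ∈ B := by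
      intro y hy
      rcases hy with hy | hy
      · exact Or.inl hy
      · by_cases hyC : y ∈ C
        · exact Or.inl hyC
        · exact Or.inr (Finset.mem_sdiff.2 ⟨hy, hyC⟩)
    refine no_small_cut G hk B C (fun x hx hxB => (Finset.mem_sdiff.1 hxB).2 hx)
      ⟨a, by simp [hC]⟩ ?_ ?_ ?_
    · have hF : ({a, b, c, ea, eb, ec, r} : Finset V).card < Fintype.card V := by
        have h1 := Finset.card_insert_le a ({b, c, ea, eb, ec, r} : Finset V)
        have h2 := Finset.card_insert_le b ({c, ea, eb, ec, r} : Finset V)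
        have h3 := Finset.card_insert_le c ({ea, eb, ec, r} : Finset V)
        have h4 := Finset.card_insert_le ea ({eb, ec, r} : Finset V)
        have h5 := Finset.card_insert_le eb ({ec, r} : Finset V)
        have h6 := Finset.card_insert_le ec ({r} : Finset V)
        have h7 : ({r} : Finset V).card = 1 := Finset.card_singleton r
        omega
      obtain ⟨w, hwF⟩ := exists_outside _ hF
      refine ⟨w, ?_, ?_⟩
      · intro hwC
        apply hwF
        simp only [hC, Finset.mem_insert, Finset.mem_singleton] at hwC ⊢
        tauto
      · intro hwB
        have := (Finset.mem_sdiff.1 hwB).1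
        apply hwF
        simp only [Finset.mem_insert, Finset.mem_singleton] at this ⊢
        tauto
    · intro x hx y hxy
      have hyN : y ∈ G.neighborFinset x := (G.mem_neighborFinset x y).2 hxy
      simp only [hC, Finset.mem_insert, Finset.mem_singleton] at hx
      rcases hx with rfl | rfl | rfl | rfl | rfl
      · rw [hNa] at hyN
        simp only [Finset.mem_insert, Finset.mem_singleton] at hyN
        apply hmem; left
        simp only [hC, Finset.mem_insert, Finset.mem_singleton]
        tauto
      · rw [hNb] at hyN
        simp only [Finset.mem_insert, Finset.mem_singleton] at hyN
        apply hmem; left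
        simp only [hC, Finset.mem_insert, Finset.mem_singleton]
        tauto
      · rw [hNc] at hyN
        simp only [Finset.mem_insert, Finset.mem_singleton] at hyN
        apply hmem
        rcases hyN with rfl | rfl | rfl
        · left; simp [hC]
        · left; simp [hC]
        · right; simp
      · apply hmem
        rcases hNea' y hxy with rfl | rfl | rfl
        · left; simp [hC]
        · left; simp [hC]
        · right; simp
      · rw [hNeb] at hyN
        simp only [Finset.mem_insert, Finset.mem_singleton] at hyN
        apply hmem
        rcases hyN with rfl | rfl | rfl
        · left; simp [hC]
        · right; simp
        · left; simp [hC]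
    · calc B.card ≤ ({ec, r} : Finset V).card := Finset.card_le_card (Finset.sdiff_subset)
        _ ≤ 2 := by
          have h5 := Finset.card_insert_le ec ({r} : Finset V)
          have h6 : ({r} : Finset V).card = 1 := Finset.card_singleton r
          omega
  rcases hebpq with rfl | rfl
  · -- eb = p, r = q
    refine main q h2 h3 ?_
    intro y hy
    have : y ∈ G.neighborFinset ea := (G.mem_neighborFinset ea y).2 hy
    rw [hNea] at this
    simp only [Finset.mem_insert, Finset.mem_singleton] at this
    tauto
  · -- eb = q, r = p
    refine main p h1 h3.symm ?_
    intro y hy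
    have : y ∈ G.neighborFinset ea := (G.mem_neighborFinset ea y).2 hy
    rw [hNea] at this
    simp only [Finset.mem_insert, Finset.mem_singleton] at this
    tauto

end Triangle

set_option maxHeartbeats 1000000 in
/-- Every connected cubic graph of order at least 8 with connectivity 3 has an
independent vertex cut of cardinality 3. -/
theorem cubic_connectivity_three_independent_cut
    {V : Type*} [Fintype V] (G : SimpleGraph V)
    (hconn : G.Connected)
    (hcubic : ∀ v : V, (G.neighborSet v).ncard = 3)
    (h8 : 8 ≤ Fintype.card V)
    (hk : graphConnectivity G = 3) :
    ∃ S : Finset V, IsVertexCut G S ∧ S.card = 3 ∧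
      ∀ a ∈ S, ∀ b ∈ S, ¬ G.Adj a b := by
  classical
  have hd : ∀ v : V, (G.neighborFinset v).card = 3 := by
    intro v
    rw [neighborFinset_def, ← Set.ncard_eq_toFinset_card']
    exact hcubic v
  by_cases htri : ∀ v : V, ∃ p q, G.Adj v p ∧ G.Adj v q ∧ G.Adj p q
  · -- every vertex lies in a triangle
    have hV : 0 < Fintype.card V := by omega
    obtain ⟨t1⟩ := Fintype.card_pos_iff.1 hV
    obtain ⟨t2, t3, h12, h13, h23⟩ := htri t1
    obtain ⟨e1, hN1, he1a, he1b, he1c⟩ := third_nbr G hd t1 t2 t3 h12 h13 h23.ne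
    obtain ⟨e2, hN2, he2a, he2b, he2c⟩ := third_nbr G hd t2 t1 t3 h12.symm h23 h13.ne
    obtain ⟨e3, hN3, he3a, he3b, he3c⟩ := third_nbr G hd t3 t1 t2 h13.symm h23.symm h12.ne
    have hN1' : G.neighborFinset t1 = {t3, t2, e1} := by
      rw [hN1, Finset.insert_comm]
    have hN2' : G.neighborFinset t2 = {t3, t1, e2} := by
      rw [hN2, Finset.insert_comm]
    have hN3' : G.neighborFinset t3 = {t2, t1, e3} := by
      rw [hN3, Finset.insert_comm]
    have d12 : e1 ≠ e2 := ext_distinct G hk hd h8 h12 h13 h23 hN1 hN2 hN3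
    have d13 : e1 ≠ e3 := ext_distinct G hk hd h8 h13 h12 h23.symm hN1' hN3 hN2
    have d23 : e2 ≠ e3 := ext_distinct G hk hd h8 h23 h12.symm h13.symm hN2' hN3' hN1
    have n12 : ¬ G.Adj e1 e2 :=
      ext_nonadj G hk hd h8 htri h12 h13 h23 hN1 hN2 hN3
        he1a he1b he2a he2b he3a he3b d12 d13
    have n13 : ¬ G.Adj e1 e3 :=
      ext_nonadj G hk hd h8 htri h13 h12 h23.symm hN1' hN3 hN2
        he1b he1a he3a he3b he2a he2b d13 d12
    have n23 : ¬ G.Adj e2 e3 :=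
      ext_nonadj G hk hd h8 htri h23 h12.symm h13.symm hN2' hN3' hN1
        he2b he2a he3b he3a he1a he1b d23 d12.symm
    refine ⟨{e1, e2, e3}, ?_, ?_, ?_⟩
    · -- vertex cut separating the triangle {t1,t2,t3} from the rest
      have hF : ({e1, e2, e3, t1, t2, t3} : Finset V).card < Fintype.card V := by
        have h1 := Finset.card_insert_le e1 ({e2, e3, t1, t2, t3} : Finset V)
        have h2 := Finset.card_insert_le e2 ({e3, t1, t2, t3} : Finset V)
        have h3 := Finset.card_insert_le e3 ({t1, t2, t3} : Finset V)
        have h4 := Finset.card_insert_le t1 ({t2, t3} : Finset V)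
        have h5 := Finset.card_insert_le t2 ({t3} : Finset V)
        have h6 : ({t3} : Finset V).card = 1 := Finset.card_singleton t3
        omega
      obtain ⟨w, hwF⟩ := exists_outside _ hF
      refine cut_of_partition G {e1, e2, e3} (P := (· ∈ ({t1, t2, t3} : Finset V)))
        (c := t1) (w := w) ?_ ?_ (by simp) ?_ ?_
      · simp only [Finset.mem_insert, Finset.mem_singleton, not_or]
        exact ⟨Ne.symm he1c, Ne.symm he2a, Ne.symm he3a⟩
      · intro hwS
        apply hwF
        simp only [Finset.mem_insert, Finset.mem_singleton] at hwS ⊢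
        tauto
      · intro hwT
        apply hwF
        simp only [Finset.mem_insert, Finset.mem_singleton] at hwT ⊢
        tauto
      · intro x y hxP hxy hyS
        have hyN : y ∈ G.neighborFinset x := (G.mem_neighborFinset x y).2 hxy
        simp only [Finset.mem_insert, Finset.mem_singleton] at hxP hyS ⊢
        push_neg at hyS
        rcases hxP with rfl | rfl | rfl
        · rw [hN1] at hyN
          simp only [Finset.mem_insert, Finset.mem_singleton] at hyN
          rcases hyN with rfl | rfl | rfl
          · tauto
          · tauto
          · exact absurd rfl hyS.1
        · rw [hN2] at hyN
          simp only [Finset.mem_insert, Finset.mem_singleton] at hyN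
          rcases hyN with rfl | rfl | rfl
          · tauto
          · tauto
          · exact absurd rfl hyS.2.1
        · rw [hN3] at hyN
          simp only [Finset.mem_insert, Finset.mem_singleton] at hyN
          rcases hyN with rfl | rfl | rfl
          · tauto
          · tauto
          · exact absurd rfl hyS.2.2
    · rw [Finset.card_insert_of_notMem (by simp [d12, d13]),
        Finset.card_insert_of_notMem (by simp [d23]), Finset.card_singleton]
    · intro x hx y hy
      simp only [Finset.mem_insert, Finset.mem_singleton] at hx hy
      rcases hx with rfl | rfl | rfl <;> rcases hy with rfl | rfl | rfl
      exacts [G.irrefl, n12, n13, fun h => n12 h.symm, G.irrefl, n23,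
        fun h => n13 h.symm, fun h => n23 h.symm, G.irrefl]
  · -- some vertex is in no triangle: its neighbourhood is an independent cut
    push_neg at htri
    obtain ⟨v, hv⟩ := htri
    refine ⟨G.neighborFinset v, ?_, hd v, ?_⟩
    · have hF : (insert v (G.neighborFinset v)).card < Fintype.card V := by
        have h1 := Finset.card_insert_le v (G.neighborFinset v)
        have h2 := hd v
        omega
      obtain ⟨w, hwF⟩ := exists_outside _ hF
      refine cut_of_partition G (G.neighborFinset v) (P := (· = v)) (c := v) (w := w)
        ?_ ?_ rfl ?_ ?_
      · simp
      · exact fun h => hwF (Finset.mem_insert_of_mem h)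
      · intro h
        exact hwF (by rw [h]; exact Finset.mem_insert_self v _)
      · rintro x y rfl hxy hyS
        exact absurd ((G.mem_neighborFinset x y).2 hxy) hyS
    · intro a ha b hb hab
      exact hv a b ((G.mem_neighborFinset v a).1 ha) ((G.mem_neighborFinset v b).1 hb) hab
end

section
/- Every connected 4-regular finite simple graph G of order at least 7 with connectivity κ(G) = 3 has a vertex cut S of cardinality 3 such that the induced subgraph G[S] is a forest. -/
open SimpleGraph

/-!
Take a minimum vertex cut `S`; if `G[S]` is not a forest, it is a triangle `{a, b, c}`. Let `C`
be a union of components of `G - S` that is not all of `G - S`. By minimality every vertex of `S`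
has a neighbour in `C` and one in the rest of `G - S`; as it is also adjacent to the other two
vertices of `S`, it has exactly one neighbour in `C`. Let `x` be the neighbour of `a` in `C`.
Then `{x, b, c}` separates `C \ {x}`, which is nonempty because `x` has degree `4`, from the rest
of the graph, and it is a forest unless `x` is adjacent to `b` and `c`; but then `{x}` alone would
be a vertex cut.
-/

lemma SimpleGraph.isClique_univ_of_not_isAcyclic {W : Type*} [Fintype W] {H : SimpleGraph W}
    (hcard : Fintype.card W ≤ 3) (h : ¬ H.IsAcyclic) : H.IsClique Set.univ := by
  obtain ⟨v, c, hc⟩ : ∃ (v : W) (c : H.Walk v v), c.IsCycle := by simpa [IsAcyclic] using h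
  have hlen : c.length = 3 := by
    have := hc.isPath_tail.length_lt
    have := c.length_tail_add_one hc.not_nil
    have := hc.three_le_length
    omega
  obtain ⟨s, hs⟩ := is3Clique_iff_exists_cycle_length_three.mpr ⟨v, c, hc, hlen⟩
  have hs_univ : s = Finset.univ :=
    Finset.eq_univ_of_card s (le_antisymm s.card_le_univ (hs.card_eq ▸ hcard))
  simpa [hs_univ] using hs.isClique

section

variable {V : Type*} {G : SimpleGraph V}

lemma isClique_of_not_isAcyclic_induce {S : Finset V} (hS : S.card ≤ 3)
    (h : ¬ (G.induce (S : Set V)).IsAcyclic) : G.IsClique (S : Set V) := by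
  simpa using isClique_induce_iff.mp (isClique_univ_of_not_isAcyclic (by simpa using hS) h)

lemma SimpleGraph.IsClique.ncard_neighborSet_diff_add [Finite V] {S : Finset V} {v : V}
    (hS : G.IsClique (S : Set V)) (hv : v ∈ S) :
    (G.neighborSet v \ S).ncard + (S.card - 1) = (G.neighborSet v).ncard := by
  classical
  have hinter : G.neighborSet v ∩ S = ↑(S.erase v) := by
    ext y
    simp only [Set.mem_inter_iff, mem_neighborSet, Finset.mem_coe, Finset.coe_erase,
      Set.mem_sdiff, Set.mem_singleton_iff]
    exact ⟨fun ⟨hvy, hy⟩ => ⟨hy, hvy.ne'⟩, fun ⟨hy, hyv⟩ => ⟨hS hv hy (Ne.symm hyv), hy⟩⟩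
  rw [← Set.ncard_inter_add_ncard_sdiff_eq_ncard (G.neighborSet v) S, hinter,
    Set.ncard_coe_finset, Finset.card_erase_of_mem hv, add_comm]

lemma graphConnectivity_le_card [Fintype V] {S : Finset V} (hS : IsVertexCut G S) :
    graphConnectivity G ≤ S.card :=
  Nat.sInf_le ⟨S, hS, rfl⟩

lemma exists_isVertexCut_card_eq_graphConnectivity [Fintype V] (h : graphConnectivity G ≠ 0) :
    ∃ S : Finset V, IsVertexCut G S ∧ S.card = graphConnectivity G :=
  Nat.sInf_mem (Nat.nonempty_of_pos_sInf (Nat.pos_of_ne_zero h))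

structure IsSeparation (G : SimpleGraph V) (S : Finset V) (X : Set V) : Prop where
  notMem_of_mem : ∀ ⦃x⦄, x ∈ X → x ∉ S
  mem_or_mem_of_adj : ∀ ⦃x y⦄, x ∈ X → G.Adj x y → y ∈ X ∨ y ∈ S
  nonempty : X.Nonempty
  exists_notMem : ∃ w, w ∉ X ∧ w ∉ S

lemma IsVertexCut.exists_isSeparation [Fintype V] {S : Finset V} (h : IsVertexCut G S) :
    ∃ X, IsSeparation G S X := by
  obtain ⟨hS, hdisc⟩ := h
  obtain ⟨u, hu⟩ : ∃ u, u ∉ S := by simpa [Set.eq_univ_iff_forall] using hS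
  have : Nonempty ((S : Set V)ᶜ : Set V) := ⟨⟨u, hu⟩⟩
  obtain ⟨u, w, huw⟩ : ∃ u w, ¬ (G.induce ((S : Set V)ᶜ)).Reachable u w := by
    simpa [Preconnected] using fun h => hdisc ⟨h⟩
  refine ⟨{z | ∃ hz : z ∉ S, (G.induce ((S : Set V)ᶜ)).Reachable u ⟨z, hz⟩}, ?_, ?_, ?_, ?_⟩
  · exact fun x ⟨hx, _⟩ => hx
  · rintro x y ⟨hx, hux⟩ hxy
    by_cases hy : y ∈ S
    · exact .inr hy
    · exact .inl ⟨hy, hux.trans (Adj.reachable (by exact hxy))⟩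
  · exact ⟨u, u.2, by simp⟩
  · exact ⟨w, fun ⟨_, hw⟩ => huw hw, w.2⟩

namespace IsSeparation

variable {S : Finset V} {X : Set V}

lemma isVertexCut [Fintype V] (h : IsSeparation G S X) : IsVertexCut G S := by
  obtain ⟨u, hu⟩ := h.nonempty
  obtain ⟨w, hwX, hwS⟩ := h.exists_notMem
  refine ⟨fun hS => h.notMem_of_mem hu (by simp [← Finset.mem_coe, hS]), fun hconn => ?_⟩
  obtain ⟨p⟩ := hconn.preconnected ⟨u, h.notMem_of_mem hu⟩ ⟨w, hwS⟩
  obtain ⟨d, -, hd₁, hd₂⟩ := p.exists_boundary_dart {z | (z : V) ∈ X} hu hwX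
  rcases h.mem_or_mem_of_adj hd₁ d.adj with hd | hd
  · exact hd₂ hd
  · exact d.snd.2 hd

lemma compl (h : IsSeparation G S X) : IsSeparation G S {y | y ∉ X ∧ y ∉ S} where
  notMem_of_mem _ hx := hx.2
  mem_or_mem_of_adj x y hx hxy := by
    by_cases hyX : y ∈ X
    · exact ((h.mem_or_mem_of_adj hyX hxy.symm).elim hx.1 hx.2).elim
    · by_cases hyS : y ∈ S
      · exact .inr hyS
      · exact .inl ⟨hyX, hyS⟩
  nonempty := h.exists_notMem
  exists_notMem := by
    obtain ⟨x, hx⟩ := h.nonempty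
    exact ⟨x, fun h' => h'.1 hx, h.notMem_of_mem hx⟩

lemma erase [DecidableEq V] {a : V} (h : IsSeparation G S X) (ha : ∀ x ∈ X, ¬ G.Adj a x) :
    IsSeparation G (S.erase a) X where
  notMem_of_mem x hx := fun hx' => h.notMem_of_mem hx (Finset.mem_of_mem_erase hx')
  mem_or_mem_of_adj x y hx hxy := by
    refine (h.mem_or_mem_of_adj hx hxy).imp_right fun hy => Finset.mem_erase.mpr ⟨?_, hy⟩
    rintro rfl
    exact ha x hx hxy.symm
  nonempty := h.nonempty
  exists_notMem := by
    obtain ⟨w, hwX, hwS⟩ := h.exists_notMem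
    exact ⟨w, hwX, fun hw => hwS (Finset.mem_of_mem_erase hw)⟩

lemma diff_singleton [DecidableEq V] {R : Finset V} {x y : V} (h : IsSeparation G S X)
    (hx : x ∈ X) (hR : ∀ r ∈ R, ∀ p ∈ X, G.Adj r p → p = x) (hy : y ∈ X) (hyx : y ≠ x) :
    IsSeparation G (insert x (S \ R)) (X \ {x}) where
  notMem_of_mem p hp := by
    simp only [Finset.mem_insert, Finset.mem_sdiff, not_or, not_and, not_not]
    exact ⟨hp.2, fun hpS => (h.notMem_of_mem hp.1 hpS).elim⟩
  mem_or_mem_of_adj p q hp hpq := by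
    rcases h.mem_or_mem_of_adj hp.1 hpq with hq | hq
    · by_cases hqx : q = x
      · exact .inr (hqx ▸ Finset.mem_insert_self _ _)
      · exact .inl ⟨hq, hqx⟩
    · refine .inr (Finset.mem_insert_of_mem (Finset.mem_sdiff.mpr ⟨hq, fun hqR => ?_⟩))
      exact hp.2 (hR q hqR p hp.1 hpq.symm)
  nonempty := ⟨y, hy, hyx⟩
  exists_notMem := by
    obtain ⟨w, hwX, hwS⟩ := h.exists_notMem
    refine ⟨w, fun hw => hwX hw.1, ?_⟩
    simp only [Finset.mem_insert, Finset.mem_sdiff, not_or, not_and, not_not]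
    exact ⟨fun hwx => hwX (hwx ▸ hx), fun hw => (hwS hw).elim⟩

lemma exists_adj_mem [Finite V] {x : V} (h : IsSeparation G S X) (hx : x ∈ X)
    (hdeg : S.card < (G.neighborSet x).ncard) : ∃ y ∈ X, G.Adj x y := by
  by_contra! hno
  have hsub : G.neighborSet x ⊆ S := fun y hy =>
    (h.mem_or_mem_of_adj hx hy).resolve_left fun hyX => hno y hyX hy
  have := Set.ncard_le_ncard hsub S.finite_toSet
  rw [Set.ncard_coe_finset] at this
  omega

variable [Fintype V]

lemma isVertexCut_singleton [DecidableEq V] {x y : V} (h : IsSeparation G S X)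
    (hx : x ∈ X) (hS : ∀ r ∈ S, ∀ p ∈ X, G.Adj r p → p = x) (hy : y ∈ X) (hyx : y ≠ x) :
    IsVertexCut G {x} := by
  simpa using (h.diff_singleton hx hS hy hyx).isVertexCut

lemma exists_adj_of_card_le_graphConnectivity {a : V} (hmin : S.card ≤ graphConnectivity G)
    (h : IsSeparation G S X) (ha : a ∈ S) : ∃ x ∈ X, G.Adj a x := by
  classical
  by_contra! hno
  have := graphConnectivity_le_card (h.erase hno).isVertexCut
  rw [Finset.card_erase_of_mem ha] at this
  have := Finset.card_pos.mpr ⟨a, ha⟩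
  omega

lemma existsUnique_adj {a : V} (hmin : S.card ≤ graphConnectivity G) (h : IsSeparation G S X)
    (ha : a ∈ S) (hdeg : (G.neighborSet a \ S).ncard ≤ 2) : ∃! x, x ∈ X ∧ G.Adj a x := by
  obtain ⟨x, hx, hax⟩ := h.exists_adj_of_card_le_graphConnectivity hmin ha
  obtain ⟨z, ⟨hzX, hzS⟩, haz⟩ := h.compl.exists_adj_of_card_le_graphConnectivity hmin ha
  refine ⟨x, ⟨hx, hax⟩, fun x' ⟨hx', hax'⟩ => by_contra fun hne => ?_⟩
  have hsub : ({x', x, z} : Set V) ⊆ G.neighborSet a \ S := by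
    rintro v (rfl | rfl | rfl)
    · exact ⟨hax', h.notMem_of_mem hx'⟩
    · exact ⟨hax, h.notMem_of_mem hx⟩
    · exact ⟨haz, hzS⟩
  have := Set.ncard_le_ncard hsub
  rw [Set.ncard_eq_three.mpr ⟨x', x, z, hne, fun h => hzX (h ▸ hx'), fun h => hzX (h ▸ hx), rfl⟩]
    at this
  omega

end IsSeparation

end

theorem four_regular_connectivity_three_foresty_cut_general
    {V : Type*} [Fintype V] (G : SimpleGraph V)
    (hreg : ∀ v : V, (G.neighborSet v).ncard = 4)
    (hk : graphConnectivity G = 3) :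
    ∃ S : Finset V, IsVertexCut G S ∧ S.card = 3 ∧
      (G.induce (S : Set V)).IsAcyclic := by
  classical
  obtain ⟨S, hScut, hScard⟩ := exists_isVertexCut_card_eq_graphConnectivity (hk ▸ three_ne_zero)
  rw [hk] at hScard
  by_cases hacy : (G.induce (S : Set V)).IsAcyclic
  · exact ⟨S, hScut, hScard, hacy⟩
  have hclique := isClique_of_not_isAcyclic_induce hScard.le hacy
  obtain ⟨C, hC⟩ := hScut.exists_isSeparation
  have hunique (v : V) (hv : v ∈ S) : ∃! x, x ∈ C ∧ G.Adj v x := by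
    refine hC.existsUnique_adj (by omega) hv ?_
    have := hclique.ncard_neighborSet_diff_add hv
    rw [hreg, hScard] at this
    omega
  obtain ⟨a, b, c, hab, hac, hbc, rfl⟩ := Finset.card_eq_three.mp hScard
  obtain ⟨x, ⟨hxC, hax⟩, hxa⟩ := hunique a (by simp)
  obtain ⟨y, hyC, hxy⟩ := hC.exists_adj_mem hxC (by rw [hreg x, hScard]; norm_num)
  obtain ⟨-, hxb, hxc⟩ : x ≠ a ∧ x ≠ b ∧ x ≠ c := by simpa using hC.notMem_of_mem hxC
  have hxbc : ¬ (G.Adj b x ∧ G.Adj c x) := fun ⟨hbx, hcx⟩ => by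
    have hSx : ∀ r ∈ ({a, b, c} : Finset V), G.Adj r x := by simp [hax, hbx, hcx]
    have := graphConnectivity_le_card <| hC.isVertexCut_singleton hxC
      (fun r hr p hp hrp => (hunique r hr).unique ⟨hp, hrp⟩ ⟨hxC, hSx r hr⟩) hyC hxy.ne'
    rw [Finset.card_singleton] at this
    omega
  have hT : insert x ({a, b, c} \ {a}) = ({x, b, c} : Finset V) := by
    rw [Finset.sdiff_singleton_eq_erase, Finset.erase_insert (by simp [hab, hac])]
  have hTcard : ({x, b, c} : Finset V).card = 3 :=
    Finset.card_eq_three.mpr ⟨x, b, c, hxb, hxc, hbc, rfl⟩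
  refine ⟨{x, b, c}, ?_, hTcard, ?_⟩
  · exact hT ▸ (hC.diff_singleton hxC (by simpa using hxa) hyC hxy.ne').isVertexCut
  · by_contra hcyc
    have := isClique_of_not_isAcyclic_induce hTcard.le hcyc
    exact hxbc ⟨this (by simp) (by simp) hxb.symm, this (by simp) (by simp) hxc.symm⟩

/-- Every connected 4-regular graph of order at least 7 with connectivity 3
has a foresty vertex cut of cardinality 3. -/
theorem four_regular_connectivity_three_foresty_cut
    {V : Type*} [Fintype V] (G : SimpleGraph V)
    (hconn : G.Connected)
    (hreg : ∀ v : V, (G.neighborSet v).ncard = 4)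
    (h7 : 7 ≤ Fintype.card V)
    (hk : graphConnectivity G = 3) :
    ∃ S : Finset V, IsVertexCut G S ∧ S.card = 3 ∧
      (G.induce (S : Set V)).IsAcyclic :=
  four_regular_connectivity_three_foresty_cut_general G hreg hk
end
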